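/- arXiv:1907.07779 — 4 statements merged into one kernel-verified Lean document; each statement's English description precedes it below -/
import Mathlib

section
/- Let J be a linear complex structure on ℝ^{2n} (a linear endomorphism with J² = −I) and let α > 0 be such that ω₀(Ju,u) ≥ α|u|² for every u ∈ ℝ^{2n}. Then the endomorphism J + J₀ is invertible and ‖(J+J₀)^{-1}‖ ≤ 1/(1+α). -/
/-! Since `ω₀(J₀u, u) = |u|²`, the hypothesis gives `ω₀((J + J₀)u, u) ≥ (1 + α)|u|²`, while
`ω₀(v, u) ≤ |v||u|` by Cauchy–Schwarz. Hence `|(J + J₀)u| ≥ (1 + α)|u|`: the endomorphism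
`J + J₀` is injective, so invertible in finite dimension, and its inverse has norm at most
`1/(1 + α)`. -/

/- ℝ^{2n} is modeled as ℂⁿ via the identification (q,p) ↦ q + ip, under which the
standard complex structure J₀ becomes multiplication by i, the Euclidean scalar
product is the real part of the Hermitian inner product, and the standard symplectic
form ω₀ is minus the imaginary part of the Hermitian inner product (so that
u·v = ω₀(J₀u, v)). -/

noncomputable section

/-- ℝ^{2n}, identified with ℂⁿ. -/
abbrev Esp (n : ℕ) := EuclideanSpace ℂ (Fin n)

/-- The standard symplectic form ω₀ on ℝ^{2n} ≅ ℂⁿ. -/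
def omega0 {n : ℕ} (u v : Esp n) : ℝ := -((inner ℂ u v : ℂ).im)

/-- The standard complex structure J₀ on ℝ^{2n} ≅ ℂⁿ (multiplication by i),
as a continuous ℝ-linear endomorphism. -/
def Jstd (n : ℕ) : Esp n →L[ℝ] Esp n :=
  (Complex.I • (1 : Esp n →L[ℂ] Esp n)).restrictScalars ℝ

theorem ContinuousLinearMap.exists_inverse_norm_le_of_bounded_below {𝕜 E : Type*}
    [NontriviallyNormedField 𝕜] [NormedAddCommGroup E] [NormedSpace 𝕜 E]
    [FiniteDimensional 𝕜 E] (A : E →L[𝕜] E) {c : ℝ} (hc : 0 < c)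
    (hA : ∀ u, c * ‖u‖ ≤ ‖A u‖) :
    ∃ K : E →L[𝕜] E, A.comp K = .id 𝕜 E ∧ K.comp A = .id 𝕜 E ∧ ‖K‖ ≤ c⁻¹ := by
  have hinj : Function.Injective A := by
    refine (injective_iff_map_eq_zero A).2 fun u hu => norm_le_zero_iff.1 ?_
    have := hA u
    rw [hu, norm_zero] at this
    exact nonpos_of_mul_nonpos_right this hc
  let e : E ≃ₗ[𝕜] E := .ofBijective (A : E →ₗ[𝕜] E)
    ⟨hinj, LinearMap.injective_iff_surjective.1 hinj⟩
  have hbound : ∀ v, ‖e.symm v‖ ≤ c⁻¹ * ‖v‖ := fun v => by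
    rw [inv_mul_eq_div, le_div_iff₀' hc]
    simpa only [show A (e.symm v) = v from e.apply_symm_apply v] using hA (e.symm v)
  refine ⟨(e.symm : E →ₗ[𝕜] E).mkContinuous c⁻¹ hbound, ?_, ?_,
    LinearMap.mkContinuous_norm_le _ (inv_nonneg.2 hc.le) hbound⟩
  · ext v
    exact e.apply_symm_apply v
  · ext v
    exact e.symm_apply_apply v

section Omega

variable {n : ℕ}

theorem omega0_add_left (u v w : Esp n) : omega0 (u + v) w = omega0 u w + omega0 v w := by
  simp only [omega0, inner_add_left, Complex.add_im]
  ring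

theorem omega0_Jstd_self (u : Esp n) : omega0 (Jstd n u) u = ‖u‖ ^ 2 := by
  change -(inner ℂ (Complex.I • u) u).im = ‖u‖ ^ 2
  rw [inner_smul_left, Complex.conj_I, neg_mul, Complex.neg_im, neg_neg, Complex.I_mul_im]
  exact inner_self_eq_norm_sq (𝕜 := ℂ) u

theorem omega0_le_norm_mul_norm (u v : Esp n) : omega0 u v ≤ ‖u‖ * ‖v‖ :=
  calc omega0 u v ≤ |(inner ℂ u v).im| := neg_le_abs _
    _ ≤ ‖inner ℂ u v‖ := Complex.abs_im_le_norm _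
    _ ≤ ‖u‖ * ‖v‖ := norm_inner_le_norm u v

theorem mul_norm_le_norm_apply_of_mul_sq_le_omega0 (A : Esp n →L[ℝ] Esp n) {c : ℝ}
    (hA : ∀ u, c * ‖u‖ ^ 2 ≤ omega0 (A u) u) (u : Esp n) : c * ‖u‖ ≤ ‖A u‖ := by
  rcases eq_or_ne u 0 with rfl | hu
  · simp
  have hu_pos : 0 < ‖u‖ := norm_pos_iff.2 hu
  have := (hA u).trans (omega0_le_norm_mul_norm (A u) u)
  rw [sq, ← mul_assoc] at this
  exact le_of_mul_le_mul_right this hu_pos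

end Omega

theorem statement1_general {n : ℕ} (J : Esp n →L[ℝ] Esp n)
    (α : ℝ) (hα : 0 < α)
    (hbound : ∀ u : Esp n, α * ‖u‖ ^ 2 ≤ omega0 (J u) u) :
    ∃ K : Esp n →L[ℝ] Esp n,
      (J + Jstd n).comp K = ContinuousLinearMap.id ℝ (Esp n) ∧
      K.comp (J + Jstd n) = ContinuousLinearMap.id ℝ (Esp n) ∧
      ‖K‖ ≤ 1 / (1 + α) := by
  have hcoercive : ∀ u, (1 + α) * ‖u‖ ^ 2 ≤ omega0 ((J + Jstd n) u) u := fun u => by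
    rw [add_apply, omega0_add_left, omega0_Jstd_self]
    linarith [hbound u]
  rw [one_div]
  exact (J + Jstd n).exists_inverse_norm_le_of_bounded_below (by linarith)
    (mul_norm_le_norm_apply_of_mul_sq_le_omega0 _ hcoercive)

/-- If `J` is a linear complex structure on ℝ^{2n} and `α > 0`
satisfies `ω₀(Ju,u) ≥ α|u|²` for all `u`, then `J + J₀` is invertible and
`‖(J+J₀)⁻¹‖ ≤ 1/(1+α)`. -/
theorem statement1 {n : ℕ} (J : Esp n →L[ℝ] Esp n)
    (hJ2 : ∀ u : Esp n, J (J u) = -u)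
    (α : ℝ) (hα : 0 < α)
    (hbound : ∀ u : Esp n, α * ‖u‖ ^ 2 ≤ omega0 (J u) u) :
    ∃ K : Esp n →L[ℝ] Esp n,
      (J + Jstd n).comp K = ContinuousLinearMap.id ℝ (Esp n) ∧
      K.comp (J + Jstd n) = ContinuousLinearMap.id ℝ (Esp n) ∧
      ‖K‖ ≤ 1 / (1 + α) :=
  statement1_general J α hα hbound
end
end

section
/- Let J be a linear complex structure on ℝ^{2n} (a linear endomorphism with J² = −I) and let α > 0 be such that ω₀(Ju,u) ≥ α|u|² for every u ∈ ℝ^{2n}. Then (with J + J₀ invertible) one has ‖(J+J₀)^{-1}(J−J₀)‖ ≤ √(1 − 4α³/(1+α)²). -/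
/- ℝ^{2n} is modeled as ℂⁿ via the identification (q,p) ↦ q + ip, under which the
standard complex structure J₀ becomes multiplication by i, the Euclidean scalar
product is the real part of the Hermitian inner product, and the standard symplectic
form ω₀ is minus the imaginary part of the Hermitian inner product (so that
u·v = ω₀(J₀u, v)). -/

noncomputable section

/-! Since `J² = J₀² = -1`, the maps `J + J₀` and `J - J₀` anticommute, so
`(J + J₀)⁻¹ (J - J₀) = -(J - J₀) (J + J₀)⁻¹` and it suffices to bound `‖(J - J₀) u‖` by
`‖(J + J₀) u‖` pointwise. Tameness at `u` and at `J u` gives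
`(1 + α) ‖(J - J₀) u‖² ≤ (1 - α) ‖(J + J₀) u‖²`, and `(1 - α) / (1 + α) ≤ 1 - 4α³/(1 + α)²`
for `0 < α ≤ 1` (for `α > 1` the inequality forces both sides to vanish). -/

theorem add_mul_sub_eq_neg_sub_mul_add {R : Type*} [Ring R] {a b : R} (h : a * a = b * b) :
    (a + b) * (a - b) = -((a - b) * (a + b)) := by
  have : (a + b) * (a - b) + (a - b) * (a + b) = 2 * (a * a - b * b) := by noncomm_ring
  rw [h, sub_self, mul_zero] at this
  exact eq_neg_of_add_eq_zero_left this

theorem mul_sub_eq_neg_sub_mul_of_mul_add_eq_one {R : Type*} [Ring R] {a b k : R}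
    (h : a * a = b * b) (hk₁ : (a + b) * k = 1) (hk₂ : k * (a + b) = 1) :
    k * (a - b) = -((a - b) * k) :=
  calc k * (a - b) = k * ((a - b) * (a + b)) * k := by
        rw [mul_assoc, mul_assoc, hk₁, mul_one]
    _ = -(k * (a + b) * ((a - b) * k)) := by
        rw [← neg_neg ((a - b) * (a + b)), ← add_mul_sub_eq_neg_sub_mul_add h]; noncomm_ring
    _ = -((a - b) * k) := by rw [hk₂, one_mul]

theorem ContinuousLinearMap.opNorm_comp_le_of_norm_le_mul {E F G : Type*}
    [SeminormedAddCommGroup E] [SeminormedAddCommGroup F] [SeminormedAddCommGroup G]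
    [NormedSpace ℝ E] [NormedSpace ℝ F] [NormedSpace ℝ G]
    (B : E →L[ℝ] F) (A : E →L[ℝ] G) (K : G →L[ℝ] E) (hAK : A.comp K = .id ℝ G)
    {C : ℝ} (hC : 0 ≤ C) (h : ∀ u, ‖B u‖ ≤ C * ‖A u‖) : ‖B.comp K‖ ≤ C :=
  opNorm_le_bound _ hC fun x => by
    simpa [← ContinuousLinearMap.comp_apply, hAK] using h (K x)

theorem le_mul_of_one_add_mul_le_one_sub_mul {α a b : ℝ} (hα : 0 < α) (ha : 0 ≤ a)
    (hb : 0 ≤ b) (h : (1 + α) * a ≤ (1 - α) * b) :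
    a ≤ (1 - 4 * α ^ 3 / (1 + α) ^ 2) * b := by
  rcases le_or_gt α 1 with hα₁ | hα₁
  · have hgap : 1 - 4 * α ^ 3 / (1 + α) ^ 2 - (1 - α) / (1 + α)
        = 2 * α * (1 - α) * (1 + 2 * α) / (1 + α) ^ 2 := by
      field_simp
      ring
    have hc : (1 - α) / (1 + α) ≤ 1 - 4 * α ^ 3 / (1 + α) ^ 2 := by
      rw [← sub_nonneg, hgap]
      positivity
    calc a ≤ (1 - α) / (1 + α) * b := by
          rw [div_mul_eq_mul_div, le_div_iff₀ (by positivity)]; linarith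
      _ ≤ _ := mul_le_mul_of_nonneg_right hc hb
  · have ha₀ : a = 0 := by nlinarith
    have hb₀ : b = 0 := by nlinarith
    simp [ha₀, hb₀]

section Symplectic

variable {n : ℕ}

theorem Jstd_apply (u : Esp n) : Jstd n u = Complex.I • u := rfl

theorem Jstd_mul_self : Jstd n * Jstd n = -1 := by
  ext1 u
  simp [Jstd_apply, smul_smul]

theorem norm_Jstd (u : Esp n) : ‖Jstd n u‖ = ‖u‖ := by
  simp [Jstd_apply, norm_smul]

theorem omega0_swap (u v : Esp n) : omega0 u v = -omega0 v u := by
  rw [omega0, omega0, ← inner_conj_symm v u, Complex.conj_im, neg_neg]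

theorem omega0_neg_left (u v : Esp n) : omega0 (-u) v = -omega0 u v := by
  simp [omega0]

theorem re_inner_Jstd (v u : Esp n) : (inner ℂ v (Jstd n u)).re = omega0 v u := by
  simp [Jstd_apply, omega0]

theorem norm_add_Jstd_sq (v u : Esp n) :
    ‖v + Jstd n u‖ ^ 2 = ‖v‖ ^ 2 + ‖u‖ ^ 2 + 2 * omega0 v u := by
  rw [@norm_add_sq ℂ, RCLike.re_to_complex, re_inner_Jstd, norm_Jstd]
  ring

theorem norm_sub_Jstd_sq (v u : Esp n) :
    ‖v - Jstd n u‖ ^ 2 = ‖v‖ ^ 2 + ‖u‖ ^ 2 - 2 * omega0 v u := by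
  rw [@norm_sub_sq ℂ, RCLike.re_to_complex, re_inner_Jstd, norm_Jstd]
  ring

variable {J : Esp n →L[ℝ] Esp n} {α : ℝ}

/- Since `ω₀(J²u, Ju) = ω₀(Ju, u)`, tameness at `u` and at `J u` gives
`α (‖Ju‖² + ‖u‖²) ≤ 2 ω₀(Ju, u)`. -/
theorem one_add_mul_norm_sub_Jstd_sq_le (hJ2 : ∀ u, J (J u) = -u)
    (hbound : ∀ u, α * ‖u‖ ^ 2 ≤ omega0 (J u) u) (u : Esp n) :
    (1 + α) * ‖(J - Jstd n) u‖ ^ 2 ≤ (1 - α) * ‖(J + Jstd n) u‖ ^ 2 := by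
  have hJu : α * ‖J u‖ ^ 2 ≤ omega0 (J u) u := by
    simpa [hJ2, omega0_neg_left, ← omega0_swap] using hbound (J u)
  rw [sub_apply, add_apply, norm_sub_Jstd_sq, norm_add_Jstd_sq]
  linarith [hbound u]

theorem norm_sub_Jstd_le (hJ2 : ∀ u, J (J u) = -u) (hα : 0 < α)
    (hbound : ∀ u, α * ‖u‖ ^ 2 ≤ omega0 (J u) u) (u : Esp n) :
    ‖(J - Jstd n) u‖ ≤ Real.sqrt (1 - 4 * α ^ 3 / (1 + α) ^ 2) * ‖(J + Jstd n) u‖ := by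
  rw [← Real.sqrt_sq (norm_nonneg ((J + Jstd n) u)), ← Real.sqrt_mul' _ (sq_nonneg _)]
  apply Real.le_sqrt_of_sq_le
  exact le_mul_of_one_add_mul_le_one_sub_mul hα (sq_nonneg _) (sq_nonneg _)
    (one_add_mul_norm_sub_Jstd_sq_le hJ2 hbound u)

end Symplectic

/-- If `J` is a linear complex structure on ℝ^{2n} and `α > 0`
satisfies `ω₀(Ju,u) ≥ α|u|²` for all `u`, then (J + J₀ being invertible) any
two-sided inverse `K` of `J + J₀` satisfies
`‖(J+J₀)⁻¹ (J−J₀)‖ ≤ √(1 − 4α³/(1+α)²)`. -/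
theorem statement2 {n : ℕ} (J : Esp n →L[ℝ] Esp n)
    (hJ2 : ∀ u : Esp n, J (J u) = -u)
    (α : ℝ) (hα : 0 < α)
    (hbound : ∀ u : Esp n, α * ‖u‖ ^ 2 ≤ omega0 (J u) u)
    (K : Esp n →L[ℝ] Esp n)
    (hK1 : (J + Jstd n).comp K = ContinuousLinearMap.id ℝ (Esp n))
    (hK2 : K.comp (J + Jstd n) = ContinuousLinearMap.id ℝ (Esp n)) :
    ‖K.comp (J - Jstd n)‖ ≤ Real.sqrt (1 - 4 * α ^ 3 / (1 + α) ^ 2) := by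
  have hsq : J * J = Jstd n * Jstd n := by
    rw [Jstd_mul_self]
    ext1 u
    exact hJ2 u
  have hanti : K * (J - Jstd n) = -((J - Jstd n) * K) :=
    mul_sub_eq_neg_sub_mul_of_mul_add_eq_one hsq hK1 hK2
  rw [← ContinuousLinearMap.mul_def, hanti, norm_neg, ContinuousLinearMap.mul_def]
  exact ContinuousLinearMap.opNorm_comp_le_of_norm_le_mul _ _ K hK1 (Real.sqrt_nonneg _)
    (norm_sub_Jstd_le hJ2 hα hbound)
end
end

section
/- Let H_W: ℝ^{2n} → ℝ be continuous, of class C¹ on ℝ^{2n}, smooth and positive on ℝ^{2n}\{0}, and positively 2-homogeneous: H_W(λz) = λ²H_W(z) for all λ > 0 and z ∈ ℝ^{2n}. Let η > 0 be such that the only 1-periodic solution of ẋ(t) = −ηJ₀∇H_W(x(t)) is the constant loop at 0 (i.e., η is not in the action spectrum of the level set {H_W = 1}). Let H ∈ C^∞(𝕋×ℝ^{2n}) satisfy H(t,z) = ηH_W(z) + ξ for all t ∈ 𝕋 and all |z| ≥ R, for some ξ ∈ ℝ and R > 0. Then there exist positive numbers a' and b' such that every smooth loop x: 𝕋 → ℝ^{2n}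 satisfies ‖ẋ − X_H(x)‖_{L²(𝕋)} ≥ a'‖x‖_{L²(𝕋)} − b'. In particular, H is non-resonant at infinity. -/
/- 𝕋 = ℝ/ℤ: loops are represented as 1-periodic functions on ℝ.
ℝ^{2n} is modeled as ℂⁿ via (q,p) ↦ q + ip, so the standard complex structure J₀ is
multiplication by i and the Euclidean scalar product u·v is the real part of the
Hermitian inner product. -/

noncomputable section

open MeasureTheory

/-- The Hamiltonian vector field `X_{H_t} = −J₀∇H_t`. -/
def hamVF {n : ℕ} (H : ℝ → Esp n → ℝ) (t : ℝ) (z : Esp n) : Esp n :=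
  -(Complex.I • gradient (H t) z)

/-- `H` is non-resonant at infinity: there are `ε > 0` and `r > 0` such that every
smooth loop `x` with `‖ẋ − X_H(x)‖_{L²(𝕋)} ≤ ε` satisfies `‖x‖_{L²(𝕋)} ≤ r`. -/
def NonResonant {n : ℕ} (H : ℝ → Esp n → ℝ) : Prop :=
  ∃ ε > (0:ℝ), ∃ r > (0:ℝ), ∀ x : ℝ → Esp n,
    ContDiff ℝ (⊤ : ℕ∞) x → Function.Periodic x 1 →
    Real.sqrt (∫ t in (0:ℝ)..1, ‖deriv x t - hamVF H t (x t)‖ ^ 2) ≤ ε →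
    Real.sqrt (∫ t in (0:ℝ)..1, ‖x t‖ ^ 2) ≤ r

open Filter Topology intervalIntegral

section Helpers

/-- Cauchy-Schwarz for interval integrals of nonneg continuous functions. -/
lemma cs2 (f g : ℝ → ℝ) (hf : Continuous f) (hg : Continuous g)
    (hf0 : ∀ t, 0 ≤ f t) (hg0 : ∀ t, 0 ≤ g t) {a b : ℝ} (hab : a ≤ b) :
    ∫ t in a..b, f t * g t ≤
      Real.sqrt (∫ t in a..b, (f t)^2) * Real.sqrt (∫ t in a..b, (g t)^2) := by
  set A := Real.sqrt (∫ t in a..b, (f t)^2) with hA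
  set B := Real.sqrt (∫ t in a..b, (g t)^2) with hB
  have hA0 : 0 ≤ A := Real.sqrt_nonneg _
  have hB0 : 0 ≤ B := Real.sqrt_nonneg _
  have hf2i : IntervalIntegrable (fun t => (f t)^2) volume a b :=
    (hf.pow 2).intervalIntegrable a b
  have hg2i : IntervalIntegrable (fun t => (g t)^2) volume a b :=
    (hg.pow 2).intervalIntegrable a b
  have hfgi : IntervalIntegrable (fun t => f t * g t) volume a b :=
    (hf.mul hg).intervalIntegrable a b
  have hA2 : A^2 = ∫ t in a..b, (f t)^2 := by
    rw [hA, Real.sq_sqrt]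
    exact intervalIntegral.integral_nonneg hab (fun t _ => sq_nonneg _)
  have hB2 : B^2 = ∫ t in a..b, (g t)^2 := by
    rw [hB, Real.sq_sqrt]
    exact intervalIntegral.integral_nonneg hab (fun t _ => sq_nonneg _)
  have key : ∀ ε : ℝ, 0 < ε → (∫ t in a..b, f t * g t) ≤ (A + ε) * (B + ε) := by
    intro ε hε
    have hAε : 0 < A + ε := by linarith
    have hBε : 0 < B + ε := by linarith
    set c := Real.sqrt ((B + ε)/(A + ε)) with hc
    have hc0 : 0 < c := Real.sqrt_pos.2 (div_pos hBε hAε)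
    have hcsq : c^2 = (B + ε)/(A + ε) := Real.sq_sqrt (le_of_lt (div_pos hBε hAε))
    have hcinv : (c⁻¹)^2 = (A + ε)/(B + ε) := by
      rw [inv_pow, hcsq, inv_div]
    have hpt : ∀ t, f t * g t ≤ (c^2 * (f t)^2 + (c⁻¹)^2 * (g t)^2)/2 := by
      intro t
      have h1 : c * f t * (c⁻¹ * g t) = f t * g t := by
        field_simp
      nlinarith [sq_nonneg (c * f t - c⁻¹ * g t)]
    have hmono : (∫ t in a..b, f t * g t) ≤
        ∫ t in a..b, (c^2 * (f t)^2 + (c⁻¹)^2 * (g t)^2)/2 := by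
      apply intervalIntegral.integral_mono_on hab hfgi
      · exact (((continuous_const.mul (hf.pow 2)).add
          (continuous_const.mul (hg.pow 2))).div_const 2).intervalIntegrable a b
      · exact fun t _ => hpt t
    have hsplit : (∫ t in a..b, (c^2 * (f t)^2 + (c⁻¹)^2 * (g t)^2)/2)
        = (c^2 * ∫ t in a..b, (f t)^2) / 2 + ((c⁻¹)^2 * ∫ t in a..b, (g t)^2) / 2 := by
      rw [intervalIntegral.integral_div, intervalIntegral.integral_add
        ((hf2i.const_mul _)) ((hg2i.const_mul _)), intervalIntegral.integral_const_mul,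
        intervalIntegral.integral_const_mul, add_div]
    rw [hsplit] at hmono
    have e1 : c^2 * ∫ t in a..b, (f t)^2 ≤ (B + ε) * (A + ε) := by
      rw [hcsq, ← hA2, div_mul_eq_mul_div, div_le_iff₀ hAε]
      have hAq : A^2 ≤ (A+ε)^2 := by nlinarith
      nlinarith [mul_le_mul_of_nonneg_left hAq hBε.le]
    have e2 : (c⁻¹)^2 * ∫ t in a..b, (g t)^2 ≤ (A + ε) * (B + ε) := by
      rw [hcinv, ← hB2, div_mul_eq_mul_div, div_le_iff₀ hBε]
      have hBq : B^2 ≤ (B+ε)^2 := by nlinarith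
      nlinarith [mul_le_mul_of_nonneg_left hBq hAε.le]
    nlinarith [hmono, e1, e2]
  have hten : Tendsto (fun ε : ℝ => (A + ε) * (B + ε)) (𝓝[>] (0:ℝ)) (𝓝 (A * B)) := by
    have hc : Continuous fun ε : ℝ => (A + ε) * (B + ε) :=
      ((continuous_const.add continuous_id).mul (continuous_const.add continuous_id))
    have h2 := hc.tendsto 0
    simp only [add_zero] at h2
    exact h2.mono_left nhdsWithin_le_nhds
  exact ge_of_tendsto hten (eventually_nhdsWithin_of_forall (fun ε hε => key ε hε))


variable {E : Type*} [NormedAddCommGroup E] [NormedSpace ℝ E]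

variable {E : Type*} [NormedAddCommGroup E] [NormedSpace ℝ E]

lemma cs_norm (f : ℝ → E) (hf : Continuous f) {a b : ℝ} (hab : a ≤ b) :
    ∫ t in a..b, ‖f t‖ ≤ Real.sqrt (b - a) * Real.sqrt (∫ t in a..b, ‖f t‖^2) := by
  have h := cs2 (fun _ => 1) (fun t => ‖f t‖) continuous_const hf.norm
    (fun _ => zero_le_one) (fun t => norm_nonneg _) hab
  simpa using h

lemma key_est (f : ℝ → E) (hf : Continuous f) {a b : ℝ} (hab : a ≤ b) :
    ‖∫ t in a..b, f t‖ ≤ Real.sqrt (b - a) * Real.sqrt (∫ t in a..b, ‖f t‖^2) :=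
  (intervalIntegral.norm_integral_le_integral_norm hab).trans (cs_norm f hf hab)

lemma l2_add_le (u v : ℝ → E) (hu : Continuous u) (hv : Continuous v) :
    Real.sqrt (∫ t in (0:ℝ)..1, ‖u t + v t‖^2)
      ≤ Real.sqrt (∫ t in (0:ℝ)..1, ‖u t‖^2) + Real.sqrt (∫ t in (0:ℝ)..1, ‖v t‖^2) := by
  set A := Real.sqrt (∫ t in (0:ℝ)..1, ‖u t‖^2) with hA
  set B := Real.sqrt (∫ t in (0:ℝ)..1, ‖v t‖^2) with hB
  have hA0 : 0 ≤ A := Real.sqrt_nonneg _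
  have hB0 : 0 ≤ B := Real.sqrt_nonneg _
  have hA2 : A^2 = ∫ t in (0:ℝ)..1, ‖u t‖^2 :=
    Real.sq_sqrt (intervalIntegral.integral_nonneg zero_le_one fun t _ => sq_nonneg _)
  have hB2 : B^2 = ∫ t in (0:ℝ)..1, ‖v t‖^2 :=
    Real.sq_sqrt (intervalIntegral.integral_nonneg zero_le_one fun t _ => sq_nonneg _)
  have hcs := cs2 (fun t => ‖u t‖) (fun t => ‖v t‖) hu.norm hv.norm
    (fun t => norm_nonneg _) (fun t => norm_nonneg _) (zero_le_one (α := ℝ))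
  have hsum : (∫ t in (0:ℝ)..1, ‖u t + v t‖^2) ≤ (A + B)^2 := by
    have step1 : (∫ t in (0:ℝ)..1, ‖u t + v t‖^2)
        ≤ ∫ t in (0:ℝ)..1, (‖u t‖^2 + 2*(‖u t‖*‖v t‖) + ‖v t‖^2) := by
      apply intervalIntegral.integral_mono_on zero_le_one
        (((hu.add hv).norm.pow 2).intervalIntegrable _ _)
      · exact (((hu.norm.pow 2).add (continuous_const.mul (hu.norm.mul hv.norm))).add
          (hv.norm.pow 2)).intervalIntegrable _ _
      · intro t _
        simp only [Pi.pow_apply, Pi.add_apply]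
        nlinarith [norm_add_le (u t) (v t), norm_nonneg (u t), norm_nonneg (v t),
          sq_nonneg (‖u t‖ + ‖v t‖), norm_nonneg (u t + v t)]
    have step2 : (∫ t in (0:ℝ)..1, (‖u t‖^2 + 2*(‖u t‖*‖v t‖) + ‖v t‖^2))
        = (∫ t in (0:ℝ)..1, ‖u t‖^2) + 2*(∫ t in (0:ℝ)..1, ‖u t‖*‖v t‖)
          + (∫ t in (0:ℝ)..1, ‖v t‖^2) := by
      rw [intervalIntegral.integral_add, intervalIntegral.integral_add,
        intervalIntegral.integral_const_mul]
      · exact (hu.norm.pow 2).intervalIntegrable _ _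
      · exact (continuous_const.mul (hu.norm.mul hv.norm)).intervalIntegrable _ _
      · exact ((hu.norm.pow 2).add
          (continuous_const.mul (hu.norm.mul hv.norm))).intervalIntegrable _ _
      · exact (hv.norm.pow 2).intervalIntegrable _ _
    rw [step2] at step1
    nlinarith [step1, hcs]
  calc Real.sqrt (∫ t in (0:ℝ)..1, ‖u t + v t‖^2) ≤ Real.sqrt ((A+B)^2) :=
        Real.sqrt_le_sqrt hsum
  _ = A + B := Real.sqrt_sq (by linarith)

lemma l2_smul (c : ℝ) (f : ℝ → E) :
    Real.sqrt (∫ t in (0:ℝ)..1, ‖c • f t‖^2)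
      = |c| * Real.sqrt (∫ t in (0:ℝ)..1, ‖f t‖^2) := by
  have h : ∀ t : ℝ, ‖c • f t‖^2 = c^2 * ‖f t‖^2 := by
    intro t
    rw [norm_smul]
    rw [mul_pow, Real.norm_eq_abs, sq_abs]
  simp only [h, intervalIntegral.integral_const_mul]
  rw [Real.sqrt_mul (sq_nonneg c), Real.sqrt_sq_eq_abs]

lemma l2_le_of_bound (f : ℝ → E) (hf : Continuous f) (C : ℝ) (hC : 0 ≤ C)
    (h : ∀ t ∈ Set.Icc (0:ℝ) 1, ‖f t‖ ≤ C) :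
    Real.sqrt (∫ t in (0:ℝ)..1, ‖f t‖^2) ≤ C := by
  have hint : (∫ t in (0:ℝ)..1, ‖f t‖^2) ≤ C^2 := by
    have : (∫ t in (0:ℝ)..1, ‖f t‖^2) ≤ ∫ t in (0:ℝ)..1, C^2 := by
      apply intervalIntegral.integral_mono_on zero_le_one
        ((hf.norm.pow 2).intervalIntegrable _ _) intervalIntegrable_const
      intro t ht
      simp only [Pi.pow_apply]
      nlinarith [h t ht, norm_nonneg (f t)]
    simpa using this
  calc Real.sqrt (∫ t in (0:ℝ)..1, ‖f t‖^2) ≤ Real.sqrt (C^2) := Real.sqrt_le_sqrt hint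
  _ = C := Real.sqrt_sq hC

lemma l2_comp_lin {F : Type*} [NormedAddCommGroup F] (f : ℝ → E) (g : ℝ → F)
    (hf : Continuous f) (hg : Continuous g) (L : ℝ) (hL : 0 ≤ L)
    (h : ∀ t, ‖g t‖ ≤ L * ‖f t‖) :
    Real.sqrt (∫ t in (0:ℝ)..1, ‖g t‖^2) ≤ L * Real.sqrt (∫ t in (0:ℝ)..1, ‖f t‖^2) := by
  have hint : (∫ t in (0:ℝ)..1, ‖g t‖^2) ≤ L^2 * ∫ t in (0:ℝ)..1, ‖f t‖^2 := by
    rw [← intervalIntegral.integral_const_mul]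
    apply intervalIntegral.integral_mono_on zero_le_one
      ((hg.norm.pow 2).intervalIntegrable _ _)
      ((continuous_const.mul (hf.norm.pow 2)).intervalIntegrable _ _)
    intro t _
    simp only [Pi.pow_apply, Pi.mul_apply]
    nlinarith [h t, norm_nonneg (g t), norm_nonneg (f t), hL]
  calc Real.sqrt (∫ t in (0:ℝ)..1, ‖g t‖^2)
      ≤ Real.sqrt (L^2 * ∫ t in (0:ℝ)..1, ‖f t‖^2) := Real.sqrt_le_sqrt hint
  _ = L * Real.sqrt (∫ t in (0:ℝ)..1, ‖f t‖^2) := by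
      rw [Real.sqrt_mul (sq_nonneg L), Real.sqrt_sq_eq_abs, abs_of_nonneg hL]

lemma mean_pt (h : ℝ → ℝ) (hc : Continuous h) :
    ∃ t₀ ∈ Set.Icc (0:ℝ) 1, h t₀ ≤ ∫ t in (0:ℝ)..1, h t := by
  obtain ⟨t₀, ht₀, hmin⟩ := isCompact_Icc.exists_isMinOn
    (Set.nonempty_Icc.2 zero_le_one) hc.continuousOn
  refine ⟨t₀, ht₀, ?_⟩
  have : (h t₀) = ∫ t in (0:ℝ)..1, h t₀ := by simp
  rw [this]
  exact intervalIntegral.integral_mono_on zero_le_one intervalIntegrable_const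
    (hc.intervalIntegrable _ _) (fun t ht => isMinOn_iff.mp hmin t ht)

end Helpers

set_option maxHeartbeats 1000000 in
set_option synthInstance.maxHeartbeats 400000 in
set_option synthInstance.maxHeartbeats 400000 in
lemma gap {n : ℕ} (g : Esp n → Esp n) (hg : Continuous g)
    (hhom : ∀ l : ℝ, 0 < l → ∀ z, g (l • z) = l • g z)
    (L : ℝ) (hL0 : 0 ≤ L) (hlin : ∀ z, ‖g z‖ ≤ L * ‖z‖)
    (hspec : ∀ x : ℝ → Esp n, (∀ t, HasDerivAt x (g (x t)) t) →
      Function.Periodic x 1 → ∀ t, x t = 0) :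
    ∃ c > (0:ℝ), ∀ x : ℝ → Esp n, ContDiff ℝ (⊤ : ℕ∞) x → Function.Periodic x 1 →
      c * Real.sqrt (∫ t in (0:ℝ)..1, ‖x t‖ ^ 2)
        ≤ Real.sqrt (∫ t in (0:ℝ)..1, ‖deriv x t - g (x t)‖ ^ 2) := by
  by_contra hcon
  push_neg at hcon
  have hsel : ∀ k : ℕ, ∃ y : ℝ → Esp n, ContDiff ℝ (⊤ : ℕ∞) y ∧ Function.Periodic y 1 ∧
      (∫ t in (0:ℝ)..1, ‖y t‖ ^ 2) = 1 ∧
      Real.sqrt (∫ t in (0:ℝ)..1, ‖deriv y t - g (y t)‖ ^ 2) ≤ ((k:ℝ)+1)⁻¹ := by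
    intro k
    obtain ⟨x, hx, hp, hlt⟩ := hcon ((k:ℝ)+1)⁻¹ (by positivity)
    set S := Real.sqrt (∫ t in (0:ℝ)..1, ‖x t‖ ^ 2) with hS
    have hSpos : 0 < S := by
      nlinarith [Real.sqrt_nonneg (∫ t in (0:ℝ)..1, ‖deriv x t - g (x t)‖ ^ 2), hlt,
        Real.sqrt_nonneg (∫ t in (0:ℝ)..1, ‖x t‖ ^ 2),
        inv_pos.2 (show (0:ℝ) < (k:ℝ)+1 by positivity)]
    refine ⟨fun t => S⁻¹ • x t, hx.const_smul _, fun t => by simp [hp t], ?_, ?_⟩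
    · have h1 : Real.sqrt (∫ t in (0:ℝ)..1, ‖S⁻¹ • x t‖ ^ 2) = 1 := by
        rw [l2_smul, abs_of_pos (by positivity)]
        field_simp
        exact hS.symm
      have h0 : (0:ℝ) ≤ ∫ t in (0:ℝ)..1, ‖S⁻¹ • x t‖ ^ 2 :=
        intervalIntegral.integral_nonneg zero_le_one fun t _ => sq_nonneg _
      have h2 := Real.sq_sqrt h0
      rw [h1] at h2
      simpa using h2.symm
    · have hd : ∀ t : ℝ, deriv (fun t => S⁻¹ • x t) t = S⁻¹ • deriv x t :=
        fun t => ((hx.differentiable (by simp) t).hasDerivAt.const_smul S⁻¹).deriv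
      have hgy : ∀ t : ℝ, g (S⁻¹ • x t) = S⁻¹ • g (x t) :=
        fun t => hhom _ (by positivity) _
      have hrw : (∫ t in (0:ℝ)..1, ‖deriv (fun t => S⁻¹ • x t) t - g (S⁻¹ • x t)‖ ^ 2)
          = ∫ t in (0:ℝ)..1, ‖S⁻¹ • (deriv x t - g (x t))‖ ^ 2 := by
        apply intervalIntegral.integral_congr
        intro t _
        simp only [hd, hgy, smul_sub]
      rw [hrw, l2_smul, abs_of_pos (by positivity)]
      calc S⁻¹ * Real.sqrt (∫ t in (0:ℝ)..1, ‖deriv x t - g (x t)‖ ^ 2)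
          ≤ S⁻¹ * (((k:ℝ)+1)⁻¹ * S) := by
            apply mul_le_mul_of_nonneg_left hlt.le (by positivity)
      _ = ((k:ℝ)+1)⁻¹ := by field_simp

  choose y hsm hper hnorm herr using hsel
  -- basic continuity facts
  have hyc : ∀ k, Continuous (y k) := fun k => (hsm k).continuous
  have hdc : ∀ k, Continuous (deriv (y k)) := fun k => (hsm k).continuous_deriv (by simp)
  have hgyc : ∀ k, Continuous (fun t => g (y k t)) := fun k => hg.comp (hyc k)
  have herrc : ∀ k, Continuous (fun t => deriv (y k) t - g (y k t)) :=
    fun k => (hdc k).sub (hgyc k)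
  have hl2y : ∀ k, Real.sqrt (∫ t in (0:ℝ)..1, ‖y k t‖ ^ 2) = 1 := by
    intro k; rw [hnorm k, Real.sqrt_one]
  -- derivative bound in L²
  have hNd : ∀ k, Real.sqrt (∫ t in (0:ℝ)..1, ‖deriv (y k) t‖ ^ 2) ≤ 1 + L := by
    intro k
    have hsplit : (∫ t in (0:ℝ)..1, ‖deriv (y k) t‖ ^ 2)
        = ∫ t in (0:ℝ)..1, ‖(deriv (y k) t - g (y k t)) + g (y k t)‖ ^ 2 := by
      apply intervalIntegral.integral_congr
      intro t _
      simp
    rw [hsplit]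
    have h1 := l2_add_le (fun t => deriv (y k) t - g (y k t)) (fun t => g (y k t))
      (herrc k) (hgyc k)
    have h2 : Real.sqrt (∫ t in (0:ℝ)..1, ‖g (y k t)‖ ^ 2) ≤ L := by
      have := l2_comp_lin (y k) (fun t => g (y k t)) (hyc k) (hgyc k) L hL0
        (fun t => hlin (y k t))
      rwa [hl2y k, mul_one] at this
    have h3 : ((k:ℝ)+1)⁻¹ ≤ 1 := by
      rw [inv_le_one_iff₀]
      right; push_cast; linarith [Nat.cast_nonneg (α := ℝ) k]
    calc Real.sqrt (∫ t in (0:ℝ)..1, ‖(deriv (y k) t - g (y k t)) + g (y k t)‖ ^ 2)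
        ≤ Real.sqrt (∫ t in (0:ℝ)..1, ‖deriv (y k) t - g (y k t)‖ ^ 2)
          + Real.sqrt (∫ t in (0:ℝ)..1, ‖g (y k t)‖ ^ 2) := h1
    _ ≤ ((k:ℝ)+1)⁻¹ + L := add_le_add (herr k) h2
    _ ≤ 1 + L := by linarith
  -- periodicity of derivative
  have hdper : ∀ k, Function.Periodic (deriv (y k)) 1 := by
    intro k t
    have hfun : (fun s => y k (s + 1)) = y k := funext (hper k)
    calc deriv (y k) (t + 1) = deriv (fun s => y k (s + 1)) t :=
          (deriv_comp_add_const (f := y k) (a := 1) (x := t)).symm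
    _ = deriv (y k) t := by rw [hfun]
  -- Claim A : Hölder modulus
  have claimA : ∀ k, ∀ s t : ℝ, s ≤ t → t ≤ s + 1 →
      ‖y k t - y k s‖ ≤ (1 + L) * Real.sqrt (t - s) := by
    intro k s t hst hts
    have hftc : y k t - y k s = ∫ u in s..t, deriv (y k) u :=
      (intervalIntegral.integral_eq_sub_of_hasDerivAt
        (fun u _ => ((hsm k).differentiable (by simp) u).hasDerivAt)
        ((hdc k).intervalIntegrable s t)).symm
    have hke := key_est (deriv (y k)) (hdc k) hst
    have hmono : (∫ u in s..t, ‖deriv (y k) u‖ ^ 2)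
        ≤ ∫ u in s..(s+1), ‖deriv (y k) u‖ ^ 2 := by
      apply intervalIntegral.integral_mono_interval le_rfl hst hts
      · exact Filter.Eventually.of_forall (fun u => sq_nonneg _)
      · exact ((hdc k).norm.pow 2).intervalIntegrable _ _
    have hperiodic : (∫ u in s..(s+1), ‖deriv (y k) u‖ ^ 2)
        = ∫ u in (0:ℝ)..1, ‖deriv (y k) u‖ ^ 2 := by
      have hp2 : Function.Periodic (fun u => ‖deriv (y k) u‖ ^ 2) 1 := by
        intro u; simp [hdper k u]
      have := hp2.intervalIntegral_add_eq s 0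
      simpa using this
    have h2 : Real.sqrt (∫ u in s..t, ‖deriv (y k) u‖ ^ 2) ≤ 1 + L := by
      apply le_trans (Real.sqrt_le_sqrt (hmono.trans_eq hperiodic)) (hNd k)
    calc ‖y k t - y k s‖ = ‖∫ u in s..t, deriv (y k) u‖ := by rw [hftc]
    _ ≤ Real.sqrt (t - s) * Real.sqrt (∫ u in s..t, ‖deriv (y k) u‖ ^ 2) := hke
    _ ≤ Real.sqrt (t - s) * (1 + L) := by
        apply mul_le_mul_of_nonneg_left h2 (Real.sqrt_nonneg _)
    _ = (1 + L) * Real.sqrt (t - s) := mul_comm _ _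
  -- Claim B : uniform bound
  have claimB : ∀ k, ∀ t : ℝ, ‖y k t‖ ≤ 2 + L := by
    intro k t
    obtain ⟨t₀, ht₀, hmin⟩ := mean_pt (fun t => ‖y k t‖ ^ 2) ((hyc k).norm.pow 2)
    have hB1 : ‖y k t₀‖ ≤ 1 := by
      rw [hnorm k] at hmin
      nlinarith [norm_nonneg (y k t₀)]
    set m := ⌊t - t₀⌋ with hm
    set u := t - (m : ℝ) with hu
    have hyu : y k u = y k t := by
      have := (hper k).sub_int_mul_eq (x := t) (n := m)
      simpa using this
    have hfr : u - t₀ = Int.fract (t - t₀) := by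
      rw [hu, hm, ← Int.self_sub_floor]
      ring
    have hu1 : t₀ ≤ u := by
      linarith [Int.fract_nonneg (t - t₀), hfr]
    have hu2 : u ≤ t₀ + 1 := by
      linarith [(Int.fract_lt_one (t - t₀)).le, hfr]
    have hsq1 : Real.sqrt (u - t₀) ≤ 1 := Real.sqrt_le_one.mpr (by linarith)
    calc ‖y k t‖ = ‖y k u‖ := by rw [hyu]
    _ = ‖y k t₀ + (y k u - y k t₀)‖ := by rw [add_sub_cancel]
    _ ≤ ‖y k t₀‖ + ‖y k u - y k t₀‖ := norm_add_le _ _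
    _ ≤ 1 + (1 + L) * Real.sqrt (u - t₀) := add_le_add hB1 (claimA k t₀ u hu1 (by linarith))
    _ ≤ 2 + L := by nlinarith [Real.sqrt_nonneg (u - t₀), hL0]
  -- Arzela-Ascoli part
  set C₀ : ℝ := 2 + L with hC₀
  have hC₀0 : 0 < C₀ := by simp only [hC₀]; linarith
  have hmod : ∀ k (a b : ℝ), a ∈ Set.Icc (0:ℝ) 1 → b ∈ Set.Icc (0:ℝ) 1 →
      dist (y k a) (y k b) ≤ (1 + L) * Real.sqrt (dist a b) := by
    intro k a b ha hb
    rcases le_total a b with h | h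
    · rw [dist_comm, dist_eq_norm, Real.dist_eq, abs_of_nonpos (by linarith)]
      have := claimA k a b h (by cases ha; cases hb; linarith)
      simpa [neg_sub] using this
    · rw [dist_eq_norm, Real.dist_eq, abs_of_nonneg (by linarith)]
      exact claimA k b a h (by cases ha; cases hb; linarith)
  let Fb : ℕ → BoundedContinuousFunction (Set.Icc (0:ℝ) 1) (Esp n) := fun k =>
    BoundedContinuousFunction.mkOfCompact
      ⟨fun t => y k t.1, ((hyc k).comp continuous_subtype_val)⟩
  have hFbapp : ∀ k (t : Set.Icc (0:ℝ) 1), Fb k t = y k t.1 := fun k t => rfl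
  have hin_s : ∀ (f : BoundedContinuousFunction (Set.Icc (0:ℝ) 1) (Esp n))
      (x : Set.Icc (0:ℝ) 1), f ∈ Set.range Fb → f x ∈ Metric.closedBall (0 : Esp n) C₀ := by
    rintro f x ⟨k, rfl⟩
    simpa [hFbapp, Metric.mem_closedBall, dist_eq_norm] using claimB k x.1
  have hequi : Equicontinuous ((↑) : Set.range Fb → Set.Icc (0:ℝ) 1 → Esp n) := by
    apply Metric.equicontinuous_of_continuity_modulus (fun d => (1 + L) * Real.sqrt d)
    · have hcont : Continuous fun d : ℝ => (1 + L) * Real.sqrt d :=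
        continuous_const.mul Real.continuous_sqrt
      have h0 := hcont.tendsto 0
      simpa using h0
    · rintro a b ⟨f, k, rfl⟩
      exact hmod k a.1 b.1 a.2 b.2
  have hcomp : IsCompact (closure (Set.range Fb)) :=
    BoundedContinuousFunction.arzela_ascoli (Metric.closedBall (0 : Esp n) C₀)
      (isCompact_closedBall _ _) (Set.range Fb) hin_s hequi
  obtain ⟨Finf, -, φ, hφmono, hφtend⟩ :=
    hcomp.tendsto_subseq (x := Fb) (fun k => subset_closure ⟨k, rfl⟩)
  -- the limit loop
  set zf : ℝ → Esp n := fun t =>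
    Finf ⟨Int.fract t, ⟨Int.fract_nonneg t, (Int.fract_lt_one t).le⟩⟩ with hzf
  have hyfr : ∀ k (t : ℝ), y k (Int.fract t) = y k t := by
    intro k t
    have h1 := (hper k).sub_int_mul_eq (x := t) (n := ⌊t⌋)
    rw [mul_one] at h1
    rw [show Int.fract t = t - (⌊t⌋ : ℝ) from rfl]
    exact h1
  have hdist : ∀ k (t : ℝ), dist (y (φ k) t) (zf t) ≤ dist (Fb (φ k)) Finf := by
    intro k t
    have h1 := BoundedContinuousFunction.dist_coe_le_dist (f := Fb (φ k)) (g := Finf)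
      ⟨Int.fract t, ⟨Int.fract_nonneg t, (Int.fract_lt_one t).le⟩⟩
    rw [hFbapp] at h1
    simpa [hzf, hyfr] using h1
  have hd0 : Tendsto (fun k => dist (Fb (φ k)) Finf) atTop (𝓝 0) := by
    rw [tendsto_iff_dist_tendsto_zero] at hφtend
    exact hφtend
  have hpt : ∀ t : ℝ, Tendsto (fun k => y (φ k) t) atTop (𝓝 (zf t)) := by
    intro t
    rw [tendsto_iff_dist_tendsto_zero]
    exact squeeze_zero (fun k => dist_nonneg) (fun k => hdist k t) hd0
  have hzc : Continuous zf := by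
    have htu : TendstoUniformly (fun k t => y (φ k) t) zf atTop := by
      rw [Metric.tendstoUniformly_iff]
      intro ε hε
      filter_upwards [hd0.eventually (gt_mem_nhds hε)] with k hk t
      calc dist (zf t) (y (φ k) t) = dist (y (φ k) t) (zf t) := dist_comm _ _
      _ ≤ dist (Fb (φ k)) Finf := hdist k t
      _ < ε := hk
    exact htu.continuous (Filter.Eventually.of_forall (fun k => hyc (φ k))).frequently
  have hzper : Function.Periodic zf 1 := by
    intro t
    have hfr : Int.fract (t + 1) = Int.fract t := by
      have := Int.fract_add_intCast t 1
      simpa using this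
    simp only [hzf]
    congr 1
    exact Subtype.ext hfr
  have hzb : ∀ t, ‖zf t‖ ≤ C₀ := by
    intro t
    exact le_of_tendsto (hpt t).norm (Filter.Eventually.of_forall fun k => claimB (φ k) t)
  -- integral identity for the yk
  have hint_y : ∀ k (t : ℝ), y k t = y k 0 + ((∫ s in (0:ℝ)..t, g (y k s))
      + ∫ s in (0:ℝ)..t, (deriv (y k) s - g (y k s))) := by
    intro k t
    have h1 : ∫ s in (0:ℝ)..t, deriv (y k) s = y k t - y k 0 :=
      intervalIntegral.integral_eq_sub_of_hasDerivAt
        (fun u _ => ((hsm k).differentiable (by simp) u).hasDerivAt)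
        ((hdc k).intervalIntegrable 0 t)
    have h2 : (∫ s in (0:ℝ)..t, deriv (y k) s) = (∫ s in (0:ℝ)..t, g (y k s))
        + ∫ s in (0:ℝ)..t, (deriv (y k) s - g (y k s)) := by
      rw [← intervalIntegral.integral_add ((hgyc k).intervalIntegrable 0 t)
        ((herrc k).intervalIntegrable 0 t)]
      apply intervalIntegral.integral_congr
      intro s _
      simp
    have h3 : y k 0 + ((∫ s in (0:ℝ)..t, g (y k s))
        + ∫ s in (0:ℝ)..t, (deriv (y k) s - g (y k s))) = y k t := by
      rw [← h2, h1]; abel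
    exact h3.symm
  -- vanishing of the error integrals
  have herrInt : ∀ t : ℝ, Tendsto
      (fun k => ∫ s in (0:ℝ)..t, (deriv (y (φ k)) s - g (y (φ k) s))) atTop (𝓝 0) := by
    intro t
    set m : ℕ := ⌈|t|⌉₊ with hm
    have hmt : |t| ≤ (m:ℝ) := Nat.le_ceil _
    have hb : ∀ k, ‖∫ s in (0:ℝ)..t, (deriv (y k) s - g (y k s))‖
        ≤ (2*(m:ℝ)) * ((k:ℝ)+1)⁻¹ := by
      intro k
      have heper : Function.Periodic (fun s => ‖deriv (y k) s - g (y k s)‖) 1 := by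
        intro s
        simp only [hdper k s, hper k s]
      have h1 : ‖∫ s in (0:ℝ)..t, (deriv (y k) s - g (y k s))‖
          ≤ |∫ s in (0:ℝ)..t, ‖deriv (y k) s - g (y k s)‖| :=
        intervalIntegral.norm_integral_le_abs_integral_norm
      have habs := abs_le.mp hmt
      have hsub : Set.uIoc (0:ℝ) t ⊆ Set.uIoc (-(m:ℝ)) m := by
        rw [Set.uIoc_of_le (by linarith : -(m:ℝ) ≤ m)]
        rw [Set.uIoc]
        apply Set.Ioc_subset_Ioc
        · exact le_min (by linarith) habs.1
        · exact max_le (by positivity) habs.2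
      have h2 : |∫ s in (0:ℝ)..t, ‖deriv (y k) s - g (y k s)‖|
          ≤ |∫ s in (-(m:ℝ))..m, ‖deriv (y k) s - g (y k s)‖| :=
        intervalIntegral.abs_integral_mono_interval hsub
          (Filter.Eventually.of_forall fun s => norm_nonneg _)
          (((herrc k).norm).intervalIntegrable _ _)
      have h3 : (∫ s in (-(m:ℝ))..(m:ℝ), ‖deriv (y k) s - g (y k s)‖)
          = (2*(m:ℤ)) • ∫ s in (0:ℝ)..1, ‖deriv (y k) s - g (y k s)‖ := by
        have hz := heper.intervalIntegral_add_zsmul_eq (2*(m:ℤ)) (-(m:ℝ))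
          (fun t₁ t₂ => ((herrc k).norm).intervalIntegrable _ _)
        have he1 : -(m:ℝ) + (2*(m:ℤ) : ℤ) • (1:ℝ) = (m:ℝ) := by
          push_cast [zsmul_eq_mul]; ring
        rw [he1] at hz
        rw [hz, heper.intervalIntegral_add_eq (-(m:ℝ)) 0]
        norm_num
      have h4 : (∫ s in (0:ℝ)..1, ‖deriv (y k) s - g (y k s)‖) ≤ ((k:ℝ)+1)⁻¹ := by
        have hcs := cs_norm (fun s => deriv (y k) s - g (y k s)) (herrc k)
          (zero_le_one (α := ℝ))
        simp only [sub_zero, Real.sqrt_one, one_mul] at hcs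
        exact hcs.trans (herr k)
      have h5 : (0:ℝ) ≤ ∫ s in (0:ℝ)..1, ‖deriv (y k) s - g (y k s)‖ :=
        intervalIntegral.integral_nonneg zero_le_one fun s _ => norm_nonneg _
      calc ‖∫ s in (0:ℝ)..t, (deriv (y k) s - g (y k s))‖
          ≤ |∫ s in (-(m:ℝ))..m, ‖deriv (y k) s - g (y k s)‖| := h1.trans h2
      _ = (2*(m:ℝ)) * ∫ s in (0:ℝ)..1, ‖deriv (y k) s - g (y k s)‖ := by
          rw [h3]
          rw [abs_of_nonneg]
          · push_cast [zsmul_eq_mul]; ring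
          · positivity
      _ ≤ (2*(m:ℝ)) * ((k:ℝ)+1)⁻¹ := by
          apply mul_le_mul_of_nonneg_left h4 (by positivity)
    have hbound : ∀ k : ℕ, ‖∫ s in (0:ℝ)..t, (deriv (y (φ k)) s - g (y (φ k) s))‖
        ≤ (2*(m:ℝ)) * ((k:ℝ)+1)⁻¹ := by
      intro k
      refine (hb (φ k)).trans ?_
      apply mul_le_mul_of_nonneg_left _ (by positivity)
      apply inv_anti₀ (by positivity)
      have hle : (k:ℝ) ≤ (φ k : ℝ) := Nat.cast_le.mpr hφmono.le_apply
      linarith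
    have hb0 : Tendsto (fun k : ℕ => (2*(m:ℝ)) * ((k:ℝ)+1)⁻¹) atTop (𝓝 0) := by
      have h := tendsto_one_div_add_atTop_nhds_zero_nat.const_mul (2*(m:ℝ))
      simpa [one_div] using h
    exact squeeze_zero_norm hbound hb0
  -- convergence of the g-integrals
  have hgint : ∀ t : ℝ, Tendsto (fun k => ∫ s in (0:ℝ)..t, g (y (φ k) s)) atTop
      (𝓝 (∫ s in (0:ℝ)..t, g (zf s))) := by
    intro t
    have hmeas : volume (Set.uIoc (0:ℝ) t) < ⊤ := by
      rw [Set.uIoc]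
      exact measure_Ioc_lt_top
    have hset : Tendsto (fun k => ∫ s in Set.uIoc (0:ℝ) t, g (y (φ k) s) ∂volume) atTop
        (𝓝 (∫ s in Set.uIoc (0:ℝ) t, g (zf s) ∂volume)) := by
      apply tendsto_integral_of_dominated_convergence (bound := fun _ => L * C₀)
      · exact fun k => (hgyc (φ k)).aestronglyMeasurable
      · exact integrableOn_const hmeas.ne
      · intro k
        apply Filter.Eventually.of_forall
        intro s
        calc ‖g (y (φ k) s)‖ ≤ L * ‖y (φ k) s‖ := hlin _
        _ ≤ L * C₀ := mul_le_mul_of_nonneg_left (claimB _ s) hL0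
      · apply Filter.Eventually.of_forall
        intro s
        exact (hg.tendsto (zf s)).comp (hpt s)
    have hrwk : ∀ (w : ℝ → Esp n), (∫ s in (0:ℝ)..t, w s)
        = (if (0:ℝ) ≤ t then (1:ℝ) else -1) • ∫ s in Set.uIoc (0:ℝ) t, w s ∂volume := by
      intro w
      rcases le_or_gt (0:ℝ) t with h | h
      · rw [if_pos h, intervalIntegral.integral_of_le h, Set.uIoc_of_le h, one_smul]
      · rw [if_neg (not_le.mpr h), intervalIntegral.integral_of_ge h.le,
          Set.uIoc_of_ge h.le, neg_smul, one_smul]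
    simp only [hrwk]
    exact hset.const_smul _
  -- the limit equation
  have hzeq : ∀ t : ℝ, zf t = zf 0 + ∫ s in (0:ℝ)..t, g (zf s) := by
    intro t
    have h2 : (fun k => y (φ k) t) = fun k => y (φ k) 0 + ((∫ s in (0:ℝ)..t, g (y (φ k) s))
        + ∫ s in (0:ℝ)..t, (deriv (y (φ k)) s - g (y (φ k) s))) :=
      funext fun k => hint_y (φ k) t
    have h3 := (hpt 0).add ((hgint t).add (herrInt t))
    rw [← h2] at h3
    have h4 := tendsto_nhds_unique (hpt t) h3
    simpa using h4
  -- the limit is a periodic orbit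
  have hzd : ∀ t : ℝ, HasDerivAt zf (g (zf t)) t := by
    intro t
    have hgzc : Continuous fun s => g (zf s) := hg.comp hzc
    have h1 : HasDerivAt (fun u => ∫ s in (0:ℝ)..u, g (zf s)) (g (zf t)) t :=
      intervalIntegral.integral_hasDerivAt_right (hgzc.intervalIntegrable _ _)
        (hgzc.stronglyMeasurableAtFilter _ _) hgzc.continuousAt
    exact (h1.const_add (zf 0)).congr_of_eventuallyEq
      (Filter.Eventually.of_forall fun u => hzeq u)
  have hz0 : ∀ t, zf t = 0 := hspec zf hzd hzper
  -- contradiction with the normalization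
  have hlim : Tendsto (fun k => ∫ s in Set.Ioc (0:ℝ) 1, ‖y (φ k) s‖^2 ∂volume) atTop
      (𝓝 (∫ s in Set.Ioc (0:ℝ) 1, ‖zf s‖^2 ∂volume)) := by
    apply tendsto_integral_of_dominated_convergence (bound := fun _ => C₀^2)
    · exact fun k => ((hyc (φ k)).norm.pow 2).aestronglyMeasurable
    · exact integrableOn_const measure_Ioc_lt_top.ne
    · intro k
      apply Filter.Eventually.of_forall
      intro s
      have := claimB (φ k) s
      have h0 : (0:ℝ) ≤ ‖y (φ k) s‖ := norm_nonneg _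
      simp only [Real.norm_eq_abs, abs_pow, abs_norm]
      nlinarith
    · apply Filter.Eventually.of_forall
      intro s
      exact ((hpt s).norm).pow 2
  have hconst : (fun k => ∫ s in Set.Ioc (0:ℝ) 1, ‖y (φ k) s‖^2 ∂volume) = fun _ => (1:ℝ) := by
    funext k
    rw [← intervalIntegral.integral_of_le zero_le_one]
    exact hnorm (φ k)
  rw [hconst] at hlim
  have h5 : (∫ s in Set.Ioc (0:ℝ) 1, ‖zf s‖^2 ∂volume) = 1 :=
    (tendsto_nhds_unique hlim tendsto_const_nhds)
  have h6 : (∫ s in Set.Ioc (0:ℝ) 1, ‖zf s‖^2 ∂volume) = 0 := by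
    have : (fun s => ‖zf s‖^2) = fun _ => (0:ℝ) := funext fun s => by simp [hz0 s]
    rw [this]
    simp
  rw [h6] at h5
  exact zero_ne_one h5

set_option maxHeartbeats 4000000 in
/-- Let `H_W` be continuous, C¹, smooth and positive away from 0,
and positively 2-homogeneous, and let `η > 0` be such that the only 1-periodic
solution of `ẋ = −ηJ₀∇H_W(x)` is the constant loop at 0.  If `H` is smooth,
1-periodic in time and equals `ηH_W + ξ` outside a ball, then there are `a', b' > 0`
with `‖ẋ − X_H(x)‖_{L²(𝕋)} ≥ a'‖x‖_{L²(𝕋)} − b'` for every smooth loop `x`; in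
particular `H` is non-resonant at infinity. -/
theorem statement12 {n : ℕ} (HW : Esp n → ℝ)
    (hWcont : Continuous HW) (hWC1 : ContDiff ℝ 1 HW)
    (hWsm : ContDiffOn ℝ (⊤ : ℕ∞) HW {z : Esp n | z ≠ 0})
    (hWpos : ∀ z : Esp n, z ≠ 0 → 0 < HW z)
    (hWhom : ∀ l : ℝ, 0 < l → ∀ z : Esp n, HW (l • z) = l ^ 2 * HW z)
    (η : ℝ) (hη : 0 < η)
    (hspec : ∀ x : ℝ → Esp n,
      (∀ t : ℝ, HasDerivAt x (-(η • (Complex.I • gradient HW (x t)))) t) →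
      Function.Periodic x 1 → ∀ t : ℝ, x t = 0)
    (H : ℝ → Esp n → ℝ)
    (hHsmooth : ContDiff ℝ (⊤ : ℕ∞) (fun p : ℝ × Esp n => H p.1 p.2))
    (hHper : ∀ t z, H (t + 1) z = H t z)
    (ξ R : ℝ) (hR : 0 < R)
    (hHeq : ∀ (t : ℝ) (z : Esp n), R ≤ ‖z‖ → H t z = η * HW z + ξ) :
    (∃ a' > (0:ℝ), ∃ b' > (0:ℝ), ∀ x : ℝ → Esp n,
      ContDiff ℝ (⊤ : ℕ∞) x → Function.Periodic x 1 →
      a' * Real.sqrt (∫ t in (0:ℝ)..1, ‖x t‖ ^ 2) - b'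
        ≤ Real.sqrt (∫ t in (0:ℝ)..1, ‖deriv x t - hamVF H t (x t)‖ ^ 2)) ∧
    NonResonant H := by
  have hWdiff : Differentiable ℝ HW := hWC1.differentiable one_ne_zero
  have hgradcont : Continuous (gradient HW) :=
    ((InnerProductSpace.toDual ℝ (Esp n)).symm.continuous).comp
      (hWC1.continuous_fderiv one_ne_zero)
  -- homogeneity of the gradient
  have hfdhom : ∀ l : ℝ, 0 < l → ∀ z, fderiv ℝ HW (l • z) = l • fderiv ℝ HW z := by
    intro l hl z
    have h1 : HasFDerivAt (fun w => HW (l • w))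
        ((fderiv ℝ HW (l • z)).comp (l • ContinuousLinearMap.id ℝ (Esp n))) z := by
      have hin : HasFDerivAt (fun w : Esp n => l • w)
          (l • ContinuousLinearMap.id ℝ (Esp n)) z := (hasFDerivAt_id z).const_smul l
      exact (hWdiff (l • z)).hasFDerivAt.comp z hin
    have h2 : HasFDerivAt (fun w => HW (l • w)) ((l^2) • fderiv ℝ HW z) z := by
      have heq : (fun w => HW (l • w)) = fun w => l^2 * HW w := funext fun w => hWhom l hl w
      rw [heq]
      exact (hWdiff z).hasFDerivAt.const_mul (l^2)
    have h3 := h1.unique h2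
    apply ContinuousLinearMap.ext
    intro v
    have h4 := congrArg (fun T : Esp n →L[ℝ] ℝ => T v) h3
    simp only [ContinuousLinearMap.comp_apply, ContinuousLinearMap.smul_apply,
      ContinuousLinearMap.coe_smul', Pi.smul_apply, ContinuousLinearMap.id_apply] at h4 ⊢
    rw [_root_.map_smul] at h4
    simp only [smul_eq_mul] at h4 ⊢
    apply mul_left_cancel₀ (ne_of_gt hl)
    rw [h4]; ring
  have hghom : ∀ l : ℝ, 0 < l → ∀ z, gradient HW (l • z) = l • gradient HW z := by
    intro l hl z
    show (InnerProductSpace.toDual ℝ (Esp n)).symm (fderiv ℝ HW (l • z))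
      = l • (InnerProductSpace.toDual ℝ (Esp n)).symm (fderiv ℝ HW z)
    rw [hfdhom l hl z, _root_.map_smul]
  -- the homogeneous field
  have hgcont : Continuous (fun z : Esp n => -(η • (Complex.I • gradient HW z))) :=
    ((hgradcont.const_smul Complex.I).const_smul η).neg
  have hgfhom : ∀ l : ℝ, 0 < l → ∀ z : Esp n,
      -(η • (Complex.I • gradient HW (l • z))) = l • -(η • (Complex.I • gradient HW z)) := by
    intro l hl z
    rw [hghom l hl z, smul_comm Complex.I l, smul_comm η l, smul_neg]
  -- linear growth
  obtain ⟨C, hC⟩ := (isCompact_closedBall (0:Esp n) 1).exists_bound_of_continuousOn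
    hgcont.continuousOn
  set L : ℝ := max C 0 with hLdef
  have hL0 : 0 ≤ L := le_max_right _ _
  have hg0 : -(η • (Complex.I • gradient HW (0 : Esp n))) = 0 := by
    have h1 := hgfhom 2 two_pos 0
    rw [smul_zero] at h1
    have h2 := h1
    rw [two_smul] at h2
    exact (add_eq_right.mp h2.symm)
  have hlin : ∀ z : Esp n, ‖-(η • (Complex.I • gradient HW z))‖ ≤ L * ‖z‖ := by
    intro z
    rcases eq_or_ne z 0 with rfl | hz
    · simp [hg0]
    · have hr : 0 < ‖z‖ := norm_pos_iff.mpr hz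
      have hunit : (‖z‖⁻¹ • z) ∈ Metric.closedBall (0:Esp n) 1 := by
        simp [Metric.mem_closedBall, dist_eq_norm, norm_smul, abs_of_pos (inv_pos.2 hr),
          inv_mul_cancel₀ (ne_of_gt hr)]
      have h1 : -(η • (Complex.I • gradient HW z))
          = ‖z‖ • -(η • (Complex.I • gradient HW (‖z‖⁻¹ • z))) := by
        rw [← hgfhom ‖z‖ hr (‖z‖⁻¹ • z), smul_inv_smul₀ (ne_of_gt hr)]
      rw [h1, norm_smul, Real.norm_eq_abs, abs_of_pos hr, mul_comm]
      apply mul_le_mul_of_nonneg_right _ hr.le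
      exact (hC _ hunit).trans (le_max_left _ _)
  -- hamVF equals the homogeneous field far away
  have hameq : ∀ (t : ℝ) (z : Esp n), R < ‖z‖ →
      hamVF H t z = -(η • (Complex.I • gradient HW z)) := by
    intro t z hz
    have hopen : IsOpen {w : Esp n | R < ‖w‖} := isOpen_lt continuous_const continuous_norm
    have hev : (H t) =ᶠ[nhds z] (fun w => η * HW w + ξ) := by
      filter_upwards [hopen.mem_nhds hz] with w hw
      exact hHeq t w (le_of_lt hw)
    have h1 : fderiv ℝ (H t) z = fderiv ℝ (fun w => η * HW w + ξ) z := hev.fderiv_eq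
    have h2 : fderiv ℝ (fun w => η * HW w + ξ) z = η • fderiv ℝ HW z := by
      rw [fderiv_add_const]
      exact fderiv_const_mul (hWdiff z) η
    have h4 : gradient (H t) z = η • gradient HW z := by
      show (InnerProductSpace.toDual ℝ (Esp n)).symm (fderiv ℝ (H t) z) = _
      rw [h1, h2, _root_.map_smul]
      rfl
    rw [hamVF, h4, smul_comm]
  -- joint continuity of hamVF
  have hfd : ∀ (t : ℝ) (z : Esp n), fderiv ℝ (H t) z
      = (fderiv ℝ (fun p : ℝ × Esp n => H p.1 p.2) (t,z)).comp
        ((0 : Esp n →L[ℝ] ℝ).prod (ContinuousLinearMap.id ℝ (Esp n))) := by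
    intro t z
    have h1 : HasFDerivAt (fun p : ℝ × Esp n => H p.1 p.2)
        (fderiv ℝ (fun p : ℝ × Esp n => H p.1 p.2) (t,z)) (t,z) :=
      (hHsmooth.differentiable (by simp) (t,z)).hasFDerivAt
    have h2 : HasFDerivAt (fun w : Esp n => ((t, w) : ℝ × Esp n))
        ((0 : Esp n →L[ℝ] ℝ).prod (ContinuousLinearMap.id ℝ (Esp n))) z := by
      have hc : HasFDerivAt (fun _ : Esp n => t) (0 : Esp n →L[ℝ] ℝ) z := hasFDerivAt_const t z
      exact hc.prodMk (hasFDerivAt_id z)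
    exact (h1.comp z h2).fderiv
  have hhamc : Continuous (fun p : ℝ × Esp n => hamVF H p.1 p.2) := by
    have h1 : Continuous (fun p : ℝ × Esp n =>
        fderiv ℝ (fun p : ℝ × Esp n => H p.1 p.2) p) := hHsmooth.continuous_fderiv (by simp)
    have h2 : Continuous (fun p : ℝ × Esp n =>
        (fderiv ℝ (fun p : ℝ × Esp n => H p.1 p.2) p).comp
          ((0 : Esp n →L[ℝ] ℝ).prod (ContinuousLinearMap.id ℝ (Esp n)))) :=
      h1.clm_comp continuous_const
    have h3 : Continuous (fun p : ℝ × Esp n => gradient (H p.1) p.2) := by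
      have h4 : (fun p : ℝ × Esp n => gradient (H p.1) p.2)
          = fun p : ℝ × Esp n => (InnerProductSpace.toDual ℝ (Esp n)).symm
              ((fderiv ℝ (fun p : ℝ × Esp n => H p.1 p.2) p).comp
                ((0 : Esp n →L[ℝ] ℝ).prod (ContinuousLinearMap.id ℝ (Esp n)))) := by
        funext p
        show (InnerProductSpace.toDual ℝ (Esp n)).symm (fderiv ℝ (H p.1) p.2) = _
        rw [hfd p.1 p.2]
      rw [h4]
      exact ((InnerProductSpace.toDual ℝ (Esp n)).symm.continuous).comp h2
    exact (h3.const_smul Complex.I).neg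
  -- uniform bound on the difference
  have hKc : IsCompact ((Set.Icc (0:ℝ) 1) ×ˢ (Metric.closedBall (0:Esp n) (R+1))) :=
    isCompact_Icc.prod (isCompact_closedBall _ _)
  obtain ⟨M, hM⟩ := hKc.exists_bound_of_continuousOn
    ((hhamc.sub (hgcont.comp continuous_snd)).continuousOn)
  have hM0 : 0 ≤ M := by
    refine le_trans (norm_nonneg _) (hM ((0:ℝ), (0:Esp n)) ?_)
    constructor
    · exact ⟨le_refl _, zero_le_one⟩
    · simp [Metric.mem_closedBall]
      linarith
  have hMall : ∀ t ∈ Set.Icc (0:ℝ) 1, ∀ z : Esp n,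
      ‖hamVF H t z - -(η • (Complex.I • gradient HW z))‖ ≤ M := by
    intro t ht z
    rcases le_or_gt ‖z‖ (R+1) with h | h
    · exact hM (t, z) ⟨ht, by simpa [Metric.mem_closedBall, dist_eq_norm] using h⟩
    · rw [hameq t z (by linarith)]
      simpa using hM0
  -- apply the gap lemma
  obtain ⟨c, hc, hgap⟩ := gap (fun z : Esp n => -(η • (Complex.I • gradient HW z)))
    hgcont hgfhom L hL0 hlin hspec
  have main : ∀ x : ℝ → Esp n, ContDiff ℝ (⊤ : ℕ∞) x → Function.Periodic x 1 →
      c * Real.sqrt (∫ t in (0:ℝ)..1, ‖x t‖ ^ 2) - (M+1)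
        ≤ Real.sqrt (∫ t in (0:ℝ)..1, ‖deriv x t - hamVF H t (x t)‖ ^ 2) := by
    intro x hx hp
    have hxc : Continuous x := hx.continuous
    have hdc : Continuous (deriv x) := hx.continuous_deriv (by simp)
    have hhx : Continuous (fun t => hamVF H t (x t)) :=
      hhamc.comp (show Continuous fun t : ℝ => ((t, x t) : ℝ × Esp n) from continuous_id.prodMk hxc)
    have hgx : Continuous (fun t => -(η • (Complex.I • gradient HW (x t)))) :=
      hgcont.comp hxc
    have h1 := hgap x hx hp
    have h2 : Real.sqrt (∫ t in (0:ℝ)..1, ‖deriv x t - -(η • (Complex.I • gradient HW (x t)))‖ ^ 2)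
        ≤ Real.sqrt (∫ t in (0:ℝ)..1, ‖deriv x t - hamVF H t (x t)‖ ^ 2)
          + Real.sqrt (∫ t in (0:ℝ)..1, ‖hamVF H t (x t) - -(η • (Complex.I • gradient HW (x t)))‖ ^ 2) := by
      have h3 := l2_add_le (fun t => deriv x t - hamVF H t (x t))
        (fun t => hamVF H t (x t) - -(η • (Complex.I • gradient HW (x t))))
        (hdc.sub hhx) (hhx.sub hgx)
      have h4 : (∫ t in (0:ℝ)..1, ‖(deriv x t - hamVF H t (x t))
          + (hamVF H t (x t) - -(η • (Complex.I • gradient HW (x t))))‖ ^ 2)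
          = ∫ t in (0:ℝ)..1, ‖deriv x t - -(η • (Complex.I • gradient HW (x t)))‖ ^ 2 := by
        apply intervalIntegral.integral_congr
        intro t _
        simp only [sub_add_sub_cancel]
      rw [h4] at h3
      exact h3
    have h5 : Real.sqrt (∫ t in (0:ℝ)..1,
        ‖hamVF H t (x t) - -(η • (Complex.I • gradient HW (x t)))‖ ^ 2) ≤ M := by
      apply l2_le_of_bound _ (hhx.sub hgx) M hM0
      intro t ht
      exact hMall t ht (x t)
    linarith
  refine ⟨⟨c, hc, M+1, by linarith, main⟩, ?_⟩
  refine ⟨1, one_pos, (M+2)/c, by positivity, ?_⟩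
  intro x hx hp hle
  have h1 := main x hx hp
  rw [le_div_iff₀ hc]
  nlinarith [Real.sqrt_nonneg (∫ t in (0:ℝ)..1, ‖x t‖ ^ 2)]
end
end

section
/- Let G ∈ C^∞(𝕋×ℝ^{2n}) satisfy ∇²G_t(z) ≥ ℏ̄^{-1}·Id for all (t,z) ∈ 𝕋×ℝ^{2n}, where ℏ̄ > 0, and let N ∈ ℕ satisfy 2π(N+1) > ℏ̄. Then there exists δ > 0, depending only on ℏ̄ and N, such that for every smooth loop x: 𝕋 → ℝ^{2n} and every smooth zero-mean loop u: 𝕋 → ℝ^{2n} whose Fourier coefficients satisfy û_k = 0 for all 1 ≤ k ≤ N, one has −∫₀¹ J₀u̇(t)·u(t) dt + ∫₀¹ ∇²G_t(J₀ẋ(t))J₀u̇(t)·J₀u̇(t) dt ≥ δ ∫₀¹ |u̇(t)|² dt. -/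
/- 𝕋 = ℝ/ℤ: loops are represented as 1-periodic functions on ℝ.
ℝ^{2n} is modeled as ℂⁿ via (q,p) ↦ q + ip, so the standard complex structure J₀ is
multiplication by i and the Euclidean scalar product u·v is the real part of the
Hermitian inner product.  Fourier coefficients û_k refer to the expansion
u(t) = Σ_k e^{−2πkJ₀t} û_k. -/

noncomputable section

open MeasureTheory Complex

/-- The Euclidean scalar product u·v on ℝ^{2n} ≅ ℂⁿ. -/
def rinner {n : ℕ} (u v : Esp n) : ℝ := (inner ℂ u v : ℂ).re

/-- The `k`-th Fourier coefficient `û_k` of a loop, with respect to the expansion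
`u(t) = Σ_k e^{−2πkJ₀t} û_k`, i.e. `û_k = ∫₀¹ e^{2πikt} u(t) dt` under the
identification ℝ^{2n} ≅ ℂⁿ. -/
def fCoeff {n : ℕ} (u : ℝ → Esp n) (k : ℤ) : Esp n :=
  ∫ t in (0:ℝ)..1, Complex.exp (((2 * Real.pi * (k : ℝ) * t : ℝ) : ℂ) * Complex.I) • u t

def cf (f : ℝ → ℂ) (n : ℤ) : ℂ :=
  fourierCoeffOn (by norm_num : (0:ℝ) < 0 + 1) f n

lemma parseval_inner {f g : ℝ → ℂ} (hf : Continuous f) (hg : Continuous g)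
    (hpf : Function.Periodic f 1) (hpg : Function.Periodic g 1) :
    HasSum (fun n : ℤ => (starRingEnd ℂ) (cf f n) * cf g n)
      (∫ t in (0:ℝ)..1, (starRingEnd ℂ) (f t) * g t) := by
  haveI : Fact (0 < (1:ℝ)) := ⟨one_pos⟩
  have hFf : f 0 = f (0 + 1) := by simpa using (hpf 0).symm
  have hFg : g 0 = g (0 + 1) := by simpa using (hpg 0).symm
  set F : C(AddCircle (1:ℝ), ℂ) :=
    ⟨AddCircle.liftIco 1 0 f, AddCircle.liftIco_continuous hFf hf.continuousOn⟩ with hFdef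
  set G : C(AddCircle (1:ℝ), ℂ) :=
    ⟨AddCircle.liftIco 1 0 g, AddCircle.liftIco_continuous hFg hg.continuousOn⟩ with hGdef
  set fL := ContinuousMap.toLp (E := ℂ) 2 AddCircle.haarAddCircle ℂ F with hFL
  set gL := ContinuousMap.toLp (E := ℂ) 2 AddCircle.haarAddCircle ℂ G with hGL
  have hreprF : ∀ n : ℤ, fourierBasis.repr fL n = cf f n := by
    intro n
    rw [fourierBasis_repr, fourierCoeff_toLp]
    exact fourierCoeff_liftIco_eq f n
  have hreprG : ∀ n : ℤ, fourierBasis.repr gL n = cf g n := by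
    intro n
    rw [fourierBasis_repr, fourierCoeff_toLp]
    exact fourierCoeff_liftIco_eq g n
  have hs := fourierBasis.hasSum_inner_mul_inner fL gL
  have h1 : ∀ n : ℤ, (inner ℂ fL (fourierBasis n) : ℂ) * inner ℂ (fourierBasis n) gL
      = (starRingEnd ℂ) (cf f n) * cf g n := by
    intro n
    rw [← inner_conj_symm (𝕜 := ℂ) fL, ← fourierBasis.repr_apply_apply gL n,
      ← fourierBasis.repr_apply_apply fL n, hreprF, hreprG]
  have hinner : (inner ℂ fL gL : ℂ) = ∫ t in (0:ℝ)..1, (starRingEnd ℂ) (f t) * g t := by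
    rw [MeasureTheory.L2.inner_def]
    have hae : (fun a => (inner ℂ (fL a) (gL a) : ℂ))
        =ᵐ[AddCircle.haarAddCircle] fun a => (starRingEnd ℂ) (F a) * G a := by
      filter_upwards [ContinuousMap.coeFn_toLp (𝕜 := ℂ) (p := 2) (μ := AddCircle.haarAddCircle) F,
        ContinuousMap.coeFn_toLp (𝕜 := ℂ) (p := 2) (μ := AddCircle.haarAddCircle) G] with a ha hb
      rw [ha, hb, RCLike.inner_apply']
    rw [integral_congr_ae hae]
    have hvol : ∫ a, (starRingEnd ℂ) (F a) * G a ∂AddCircle.haarAddCircle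
        = ∫ a : AddCircle (1:ℝ), (starRingEnd ℂ) (F a) * G a := by
      rw [AddCircle.volume_eq_smul_haarAddCircle, integral_smul_measure]
      norm_num
    rw [hvol, ← AddCircle.intervalIntegral_preimage 1 0
      (fun a => (starRingEnd ℂ) (F a) * G a), zero_add,
      intervalIntegral.integral_of_le zero_le_one,
      intervalIntegral.integral_of_le zero_le_one,
      integral_Ioc_eq_integral_Ioo, integral_Ioc_eq_integral_Ioo]
    refine setIntegral_congr_fun measurableSet_Ioo fun x hx => ?_
    have h1 : x ∈ Set.Ico (0:ℝ) (0 + 1) := ⟨hx.1.le, by rw [zero_add]; exact hx.2⟩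
    have hF : F ↑x = f x := AddCircle.liftIco_coe_apply h1
    have hG : G ↑x = g x := AddCircle.liftIco_coe_apply h1
    rw [hF, hG]
  simp only [h1] at hs
  rwa [hinner] at hs

lemma periodic_deriv' {E : Type*} [NormedAddCommGroup E] [NormedSpace ℝ E]
    {f : ℝ → E} (hp : Function.Periodic f 1) : Function.Periodic (deriv f) 1 := by
  intro t
  have : (fun x : ℝ => f (x + 1)) = f := funext fun x => hp x
  calc deriv f (t + 1) = deriv (fun x : ℝ => f (x + 1)) t := (deriv_comp_add_const ..).symm
  _ = deriv f t := by rw [this]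

lemma cf_eq (g : ℝ → ℂ) (m : ℤ) :
    cf g m = ∫ x in (0:ℝ)..1, Complex.exp (-(2 * Real.pi * m * x : ℝ) * I) * g x := by
  rw [cf, fourierCoeffOn_eq_integral]
  norm_num
  refine intervalIntegral.integral_congr fun x hx => ?_
  rw [← Complex.exp_conj]
  congr 1
  simp only [map_mul, Complex.conj_I, Complex.conj_ofReal, map_ofNat, map_intCast]
  ring

lemma cf_deriv {f : ℝ → ℂ} (hf : ContDiff ℝ 1 f) (hpf : Function.Periodic f 1) (n : ℤ) :
    cf (deriv f) n = 2 * Real.pi * I * n * cf f n := by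
  have hdiff : Differentiable ℝ f := hf.differentiable one_ne_zero
  have hder : Continuous (deriv f) := hf.continuous_deriv le_rfl
  rcases eq_or_ne n 0 with rfl | hn
  · rw [cf_eq]
    simp only [Int.cast_zero, mul_zero, zero_mul, neg_zero, Complex.ofReal_zero,
      Complex.exp_zero, one_mul]
    rw [intervalIntegral.integral_deriv_eq_sub (fun x _ => hdiff.differentiableAt)
      (hder.intervalIntegrable _ _)]
    have : f 1 = f 0 := by simpa using hpf 0
    simp [this]
  · have h01 : (0:ℝ) < 0 + 1 := by norm_num
    have key := fourierCoeffOn_of_hasDerivAt h01 hn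
      (fun x _ => hdiff.differentiableAt.hasDerivAt)
      (hder.intervalIntegrable 0 (0+1))
    have hper : f (0 + 1) - f 0 = 0 := by rw [zero_add, sub_eq_zero]; simpa using hpf 0
    rw [hper, mul_zero, zero_sub] at key
    have key' : cf f n = 1 / (-2 * Real.pi * I * n) *
        -((((((0:ℝ) + 1 : ℝ)) : ℂ) - (((0:ℝ)) : ℂ)) * cf (fun x => deriv f x) n) := key
    have hπ : (Real.pi : ℂ) ≠ 0 := Complex.ofReal_ne_zero.mpr Real.pi_ne_zero
    have hn' : (n:ℂ) ≠ 0 := Int.cast_ne_zero.mpr hn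
    norm_num at key'
    field_simp at key'
    linear_combination (-I) * key' + cf (deriv f) n * Complex.I_sq

lemma re_conj_mul_self (z : ℂ) : ((starRingEnd ℂ) z * z).re = ‖z‖^2 := by
  rw [mul_comm, Complex.mul_conj]
  rw [Complex.normSq_eq_norm_sq, Complex.ofReal_re]

lemma re_conj_smul (r : ℝ) (c : ℂ) : ((starRingEnd ℂ) ((r:ℂ) * c) * c).re = r * ‖c‖^2 := by
  rw [map_mul, Complex.conj_ofReal, mul_assoc, mul_comm ((starRingEnd ℂ) c), Complex.mul_conj,
    ← Complex.ofReal_mul, Complex.ofReal_re]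
  rw [Complex.normSq_eq_norm_sq]

lemma coord_ineq (N : ℕ) {f : ℝ → ℂ} (hf : ContDiff ℝ 1 f) (hpf : Function.Periodic f 1)
    (hcoef : ∀ m : ℤ, -(N:ℤ) ≤ m → m ≤ 0 → cf f m = 0) :
    ∫ t in (0:ℝ)..1, ((starRingEnd ℂ) (I * deriv f t) * f t).re
      ≤ (2 * Real.pi * (N+1))⁻¹ * ∫ t in (0:ℝ)..1, ‖deriv f t‖^2 := by
  have hc : Continuous f := hf.continuous
  have hd : Continuous (deriv f) := hf.continuous_deriv le_rfl
  have hpd : Function.Periodic (deriv f) 1 := periodic_deriv' hpf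
  have hg : Continuous (fun t => I * deriv f t) := continuous_const.mul hd
  have hpg : Function.Periodic (fun t => I * deriv f t) 1 := fun t => by simp [hpd t]
  have HA := parseval_inner hg hc hpg hpf
  have HB := parseval_inner hd hd hpd hpd
  -- coefficients of I * f'
  have hcg : ∀ nn : ℤ, cf (fun t => I * deriv f t) nn = ((-(2 * Real.pi * nn) : ℝ) : ℂ) * cf f nn := by
    intro nn
    have h1 : cf (fun t => I * deriv f t) nn = I * cf (deriv f) nn :=
      fourierCoeffOn.const_mul _ _ _ _
    rw [h1, cf_deriv hf hpf]
    push_cast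
    linear_combination (2 * (Real.pi:ℂ) * nn * cf f nn) * Complex.I_sq
  -- real parts
  have hIntA : IntervalIntegrable (fun t => (starRingEnd ℂ) (I * deriv f t) * f t)
      volume 0 1 := ((Complex.continuous_conj.comp hg).mul hc).intervalIntegrable _ _
  have hIntB : IntervalIntegrable (fun t => (starRingEnd ℂ) (deriv f t) * deriv f t)
      volume 0 1 := ((Complex.continuous_conj.comp hd).mul hd).intervalIntegrable _ _
  have HA' : HasSum (fun nn : ℤ => -(2 * Real.pi * nn) * ‖cf f nn‖^2)
      (∫ t in (0:ℝ)..1, ((starRingEnd ℂ) (I * deriv f t) * f t).re) := by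
    have h2 := HA.mapL Complex.reCLM
    have h4 : (∫ t in (0:ℝ)..1, ((starRingEnd ℂ) (I * deriv f t) * f t).re)
        = Complex.reCLM (∫ t in (0:ℝ)..1, (starRingEnd ℂ) (I * deriv f t) * f t) :=
      Complex.reCLM.intervalIntegral_comp_comm hIntA
    have hfun : (fun nn : ℤ => Complex.reCLM
        ((starRingEnd ℂ) (cf (fun t => I * deriv f t) nn) * cf f nn))
        = fun nn : ℤ => -(2 * Real.pi * nn) * ‖cf f nn‖^2 := by
      funext nn
      rw [hcg nn]
      exact re_conj_smul (-(2 * Real.pi * nn)) (cf f nn)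
    rw [h4, ← hfun]
    exact h2
  have HB' : HasSum (fun nn : ℤ => (2 * Real.pi * nn)^2 * ‖cf f nn‖^2)
      (∫ t in (0:ℝ)..1, ‖deriv f t‖^2) := by
    have h2 := HB.mapL Complex.reCLM
    have h3 : (∫ t in (0:ℝ)..1, ‖deriv f t‖^2)
        = ∫ t in (0:ℝ)..1, ((starRingEnd ℂ) (deriv f t) * deriv f t).re := by
      refine intervalIntegral.integral_congr fun t _ => ?_
      rw [re_conj_mul_self]
    have h4 : (∫ t in (0:ℝ)..1, ((starRingEnd ℂ) (deriv f t) * deriv f t).re)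
        = Complex.reCLM (∫ t in (0:ℝ)..1, (starRingEnd ℂ) (deriv f t) * deriv f t) :=
      Complex.reCLM.intervalIntegral_comp_comm hIntB
    have hfun : (fun nn : ℤ => Complex.reCLM
        ((starRingEnd ℂ) (cf (deriv f) nn) * cf (deriv f) nn))
        = fun nn : ℤ => (2 * Real.pi * nn)^2 * ‖cf f nn‖^2 := by
      funext nn
      show ((starRingEnd ℂ) (cf (deriv f) nn) * cf (deriv f) nn).re = _
      rw [re_conj_mul_self, cf_deriv hf hpf]
      have heq : (2 * (Real.pi:ℂ) * I * (nn:ℂ)) * cf f nn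
          = (((2 * Real.pi * nn : ℝ)) : ℂ) * (I * cf f nn) := by
        push_cast; ring
      rw [heq, norm_mul, norm_mul, Complex.norm_I, one_mul, Complex.norm_real,
        mul_pow, Real.norm_eq_abs, _root_.sq_abs]
    rw [h3, h4, ← hfun]
    exact h2
  -- pointwise comparison
  have h2π : (0:ℝ) < 2 * Real.pi * (N+1) := by positivity
  have hpoint : ∀ nn : ℤ, -(2 * Real.pi * nn) * ‖cf f nn‖^2
      ≤ (2 * Real.pi * (N+1))⁻¹ * ((2 * Real.pi * nn)^2 * ‖cf f nn‖^2) := by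
    intro nn
    by_cases hcase : -(N:ℤ) ≤ nn ∧ nn ≤ 0
    · rw [hcoef nn hcase.1 hcase.2]
      simp
    · have hs : (0:ℝ) ≤ ‖cf f nn‖^2 := sq_nonneg _
      rw [not_and_or, not_le, not_le] at hcase
      rw [inv_mul_eq_div, le_div_iff₀ h2π]
      rcases hcase with h1 | h1
      · -- nn ≤ -(N+1)
        have hr : (nn:ℝ) ≤ -((N:ℝ)+1) := by
          have : nn ≤ -(N:ℤ) - 1 := by omega
          calc (nn:ℝ) ≤ ((-(N:ℤ) - 1 : ℤ) : ℝ) := by exact_mod_cast this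
          _ = -((N:ℝ)+1) := by push_cast; ring
        have h4 : ((-(nn:ℝ)) - ((N:ℝ)+1)) * (-(nn:ℝ)) ≥ 0 :=
          mul_nonneg (by linarith) (by linarith)
        nlinarith [mul_nonneg (mul_nonneg hs (sq_nonneg (2*Real.pi))) h4, Real.pi_pos]
      · -- 1 ≤ nn
        have hr : (1:ℝ) ≤ (nn:ℝ) := by exact_mod_cast h1
        have hnn : (0:ℝ) ≤ 2 * Real.pi * (nn:ℝ) :=
          mul_nonneg (by positivity) (by linarith)
        nlinarith [mul_nonneg (mul_nonneg hnn hs) h2π.le,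
          mul_nonneg (sq_nonneg (2*Real.pi*(nn:ℝ))) hs]
  exact hasSum_le hpoint HA' (HB'.mul_left _)

lemma vector_ineq {n : ℕ} (N : ℕ) {u : ℝ → Esp n} (hu : ContDiff ℝ (⊤ : ℕ∞) u)
    (hpu : Function.Periodic u 1)
    (hmean : (∫ t in (0:ℝ)..1, u t) = 0)
    (hvan : ∀ k : ℤ, 1 ≤ k → k ≤ (N:ℤ) → fCoeff u k = 0) :
    (∫ t in (0:ℝ)..1, rinner (I • deriv u t) (u t))
      ≤ (2 * Real.pi * ((N:ℝ)+1))⁻¹ * ∫ t in (0:ℝ)..1, ‖deriv u t‖^2 := by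
  classical
  set L : Fin n → (Esp n →L[ℝ] ℂ) :=
    fun j => (EuclideanSpace.proj (𝕜 := ℂ) j).restrictScalars ℝ with hL
  set f : Fin n → ℝ → ℂ := fun j t => u t j with hfdef
  have hucont : Continuous u := hu.continuous
  have hudiff : Differentiable ℝ u := hu.differentiable (by simp)
  have hdc : Continuous (deriv u) := hu.continuous_deriv (by simp)
  have hfj : ∀ j, ContDiff ℝ 1 (f j) := fun j =>
    ((L j).contDiff).comp (hu.of_le (by simp))
  have hder : ∀ j t, deriv (f j) t = (deriv u t) j := by
    intro j t
    have h1 : HasDerivAt u (deriv u t) t := hudiff.differentiableAt.hasDerivAt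
    exact ((L j).hasFDerivAt.comp_hasDerivAt t h1).deriv
  have hperf : ∀ j, Function.Periodic (f j) 1 := fun j t =>
    congrArg (fun v : Esp n => v j) (hpu t)
  -- coefficients vanish
  have hLsmul : ∀ j (c : ℂ) (v : Esp n), L j (c • v) = c * v j := by
    intro j c v
    show (EuclideanSpace.proj (𝕜 := ℂ) j) (c • v) = c * v j
    simp
  have hcoef : ∀ j, ∀ m : ℤ, -(N:ℤ) ≤ m → m ≤ 0 → cf (f j) m = 0 := by
    intro j m hm1 hm2
    rcases eq_or_lt_of_le hm2 with rfl | hm0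
    · -- m = 0 : mean zero
      rw [cf_eq]
      have hker : ∀ x : ℝ, Complex.exp (-(2 * Real.pi * ((0:ℤ):ℝ) * x : ℝ) * I) * f j x
          = L j (u x) := by
        intro x
        simp only [Int.cast_zero, mul_zero, zero_mul, neg_zero, Complex.ofReal_zero,
          Complex.exp_zero, one_mul]
        rfl
      simp only [hker]
      rw [(L j).intervalIntegral_comp_comm (hucont.intervalIntegrable _ _), hmean]
      simp
    · -- 1 ≤ -m ≤ N
      have hk1 : 1 ≤ -m := by omega
      have hk2 : -m ≤ (N:ℤ) := by omega
      have hkercont : Continuous fun t : ℝ =>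
          Complex.exp (((2 * Real.pi * ((-m : ℤ) : ℝ) * t : ℝ) : ℂ) * I) :=
        Complex.continuous_exp.comp
          ((Complex.continuous_ofReal.comp (continuous_const.mul continuous_id)).mul
            continuous_const)
      have hInt : IntervalIntegrable
          (fun t : ℝ => Complex.exp (((2 * Real.pi * ((-m : ℤ) : ℝ) * t : ℝ) : ℂ) * I) • u t)
          volume 0 1 := (hkercont.smul hucont).intervalIntegrable _ _
      have h0 := congrArg (L j) (hvan (-m) hk1 hk2)
      rw [map_zero, fCoeff, ← (L j).intervalIntegral_comp_comm hInt] at h0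
      rw [cf_eq, ← h0]
      refine intervalIntegral.integral_congr fun x hx => ?_
      rw [hLsmul]
      congr 1
      congr 1
      push_cast
      ring
  have hAj := fun j => coord_ineq N (hfj j) (hperf j) (hcoef j)
  have hcontdf : ∀ j, Continuous (deriv (f j)) := fun j => (hfj j).continuous_deriv le_rfl
  have hLHS : (∫ t in (0:ℝ)..1, rinner (I • deriv u t) (u t))
      = ∑ j : Fin n, ∫ t in (0:ℝ)..1, ((starRingEnd ℂ) (I * deriv (f j) t) * f j t).re := by
    rw [← intervalIntegral.integral_finset_sum]
    · refine intervalIntegral.integral_congr fun t _ => ?_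
      simp only [rinner, PiLp.inner_apply, RCLike.inner_apply', Complex.re_sum]
      refine Finset.sum_congr rfl fun j _ => ?_
      rw [hder j t]
      simp [PiLp.smul_apply, smul_eq_mul, hfdef]
    · intro j _
      exact (Complex.continuous_re.comp ((Complex.continuous_conj.comp
        (continuous_const.mul (hcontdf j))).mul (hfj j).continuous)).intervalIntegrable _ _
  have hRHS : (∫ t in (0:ℝ)..1, ‖deriv u t‖^2)
      = ∑ j : Fin n, ∫ t in (0:ℝ)..1, ‖deriv (f j) t‖^2 := by
    rw [← intervalIntegral.integral_finset_sum]
    · refine intervalIntegral.integral_congr fun t _ => ?_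
      rw [EuclideanSpace.norm_eq, Real.sq_sqrt (by positivity)]
      exact Finset.sum_congr rfl fun j _ => by rw [hder]
    · intro j _
      exact ((hcontdf j).norm.pow 2).intervalIntegrable _ _
  rw [hLHS, hRHS, Finset.mul_sum]
  exact Finset.sum_le_sum fun j _ => hAj j

/-- Let `ℏ̄ > 0` and `N ∈ ℕ` with `2π(N+1) > ℏ̄`.  Then there is
`δ > 0`, depending only on `ℏ̄` and `N`, such that for every smooth 1-periodic
`G : 𝕋 × ℝ^{2n} → ℝ` with `∇²G_t ≥ ℏ̄⁻¹·Id`, every smooth loop `x` and every smooth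
zero-mean loop `u` whose Fourier coefficients `û_k` vanish for `1 ≤ k ≤ N`, one has
`−∫₀¹ J₀u̇·u dt + ∫₀¹ ∇²G_t(J₀ẋ)J₀u̇·J₀u̇ dt ≥ δ ∫₀¹ |u̇|² dt`. -/
theorem statement16 {n : ℕ} (hbar : ℝ) (hhbar : 0 < hbar)
    (N : ℕ) (hN : hbar < 2 * Real.pi * (N + 1)) :
    ∃ δ > (0:ℝ), ∀ G : ℝ → Esp n → ℝ,
      ContDiff ℝ (⊤ : ℕ∞) (fun p : ℝ × Esp n => G p.1 p.2) →
      (∀ t z, G (t + 1) z = G t z) →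
      (∀ (t : ℝ) (z w : Esp n),
        hbar⁻¹ * ‖w‖ ^ 2 ≤ fderiv ℝ (fderiv ℝ (G t)) z w w) →
      ∀ x u : ℝ → Esp n,
        ContDiff ℝ (⊤ : ℕ∞) x → Function.Periodic x 1 →
        ContDiff ℝ (⊤ : ℕ∞) u → Function.Periodic u 1 →
        (∫ t in (0:ℝ)..1, u t) = 0 →
        (∀ k : ℤ, 1 ≤ k → k ≤ (N : ℤ) → fCoeff u k = 0) →
        δ * (∫ t in (0:ℝ)..1, ‖deriv u t‖ ^ 2)
          ≤ -(∫ t in (0:ℝ)..1, rinner (Complex.I • deriv u t) (u t))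
            + ∫ t in (0:ℝ)..1,
                fderiv ℝ (fderiv ℝ (G t)) (Complex.I • deriv x t)
                  (Complex.I • deriv u t) (Complex.I • deriv u t) := by
  have hc2 : (0:ℝ) < 2 * Real.pi * ((N:ℝ) + 1) := by positivity
  refine ⟨hbar⁻¹ - (2 * Real.pi * ((N:ℝ) + 1))⁻¹, ?_, ?_⟩
  · have h1 : (2 * Real.pi * ((N:ℝ) + 1))⁻¹ < hbar⁻¹ := by
      apply inv_strictAnti₀ hhbar
      exact_mod_cast hN
    linarith
  intro G hGsmooth _hGper hconv x u hx _hpx hu hpu hmean hvan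
  -- continuity of the Hessian term
  have hG1 : ContDiff ℝ (⊤ : ℕ∞) (fun p : ℝ × Esp n => fderiv ℝ (G p.1) p.2) :=
    ContDiff.fderiv (f := fun (p : ℝ × Esp n) (z : Esp n) => G p.1 z) (g := fun p => p.2)
      (hGsmooth.comp ((contDiff_fst.comp contDiff_fst).prodMk contDiff_snd)) contDiff_snd (by simp)
  have hG2 : ContDiff ℝ (⊤ : ℕ∞) (fun p : ℝ × Esp n => fderiv ℝ (fderiv ℝ (G p.1)) p.2) :=
    ContDiff.fderiv (f := fun (p : ℝ × Esp n) (z : Esp n) => fderiv ℝ (G p.1) z)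
      (g := fun p => p.2)
      (hG1.comp ((contDiff_fst.comp contDiff_fst).prodMk contDiff_snd)) contDiff_snd (by simp)
  have hxc : Continuous (fun t => (Complex.I • deriv x t : Esp n)) :=
    (hx.continuous_deriv (by simp)).const_smul Complex.I
  have huc : Continuous (fun t => (Complex.I • deriv u t : Esp n)) :=
    (hu.continuous_deriv (by simp)).const_smul Complex.I
  have hΦ : Continuous (fun t : ℝ => fderiv ℝ (fderiv ℝ (G t)) (Complex.I • deriv x t)) :=
    hG2.continuous.comp (continuous_id.prodMk hxc)
  have hCcont : Continuous (fun t : ℝ => fderiv ℝ (fderiv ℝ (G t)) (Complex.I • deriv x t)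
      (Complex.I • deriv u t) (Complex.I • deriv u t)) :=
    (hΦ.clm_apply huc).clm_apply huc
  have hDc : Continuous (deriv u) := hu.continuous_deriv (by simp)
  have hB : IntervalIntegrable (fun t => hbar⁻¹ * ‖deriv u t‖^2) MeasureTheory.volume 0 1 :=
    (continuous_const.mul (hDc.norm.pow 2)).intervalIntegrable _ _
  have hC : hbar⁻¹ * (∫ t in (0:ℝ)..1, ‖deriv u t‖^2)
      ≤ ∫ t in (0:ℝ)..1, fderiv ℝ (fderiv ℝ (G t)) (Complex.I • deriv x t)
          (Complex.I • deriv u t) (Complex.I • deriv u t) := by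
    rw [← intervalIntegral.integral_const_mul]
    refine intervalIntegral.integral_mono_on zero_le_one hB
      (hCcont.intervalIntegrable _ _) fun t _ => ?_
    have h2 := hconv t (Complex.I • deriv x t) (Complex.I • deriv u t)
    rwa [norm_smul, Complex.norm_I, one_mul] at h2
  have hA := vector_ineq N hu hpu hmean hvan
  linarith
end
end
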